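/- arXiv:math/0312398 — 9 statements merged into one kernel-verified Lean document; each statement's English description precedes it below -/
import Mathlib

section
/- Let p be a prime and ω a primitive p-th root of unity in ℂ. Then for any subsets I, J of {0,1,...,p-1} with |I| = |J|, the matrix (ω^{ij})_{i∈I, j∈J} has nonzero determinant. -/
open Polynomial Finset

lemma le_of_strictMono_fin {n : ℕ} {f : Fin n → ℕ} (hf : StrictMono f) : ∀ a : Fin n, (a : ℕ) ≤ f a := by
  intro a
  induction' ha : (a : ℕ) with k ih generalizing a
  · exact Nat.zero_le _
  · have hk : k < n := by have := a.2; omega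
    have hb : (⟨k, hk⟩ : Fin n) < a := by simp [Fin.lt_def, ha]
    have h1 := ih ⟨k, hk⟩ rfl
    have h2 := hf hb
    have h1' : k ≤ f ⟨k, hk⟩ := h1
    omega

lemma coeff_mul_of_X_pow_dvd {R : Type*} [CommRing R] {f g : R[X]} {d e : ℕ}
    (hf : X ^ d ∣ f) (hg : X ^ e ∣ g) :
    (f * g).coeff (d + e) = f.coeff d * g.coeff e := by
  obtain ⟨f', rfl⟩ := hf; obtain ⟨g', rfl⟩ := hg
  rw [show X ^ d * f' * (X ^ e * g') = X ^ (d + e) * (f' * g') by ring]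
  have key : ∀ (q : R[X]) (n : ℕ), (X ^ n * q).coeff n = q.coeff 0 := fun q n => by
    simpa using coeff_X_pow_mul q n 0
  rw [key, mul_coeff_zero, key, key]

lemma coeff_prod_of_X_pow_dvd {R : Type*} [CommRing R] {ι : Type*} [DecidableEq ι] (s : Finset ι)
    (f : ι → R[X]) (d : ι → ℕ) (h : ∀ i ∈ s, X ^ (d i) ∣ f i) :
    (∏ i ∈ s, f i).coeff (∑ i ∈ s, d i) = ∏ i ∈ s, (f i).coeff (d i) := by
  induction s using Finset.induction with
  | empty => simp
  | insert a s hi ih =>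
    rw [Finset.prod_insert hi, Finset.sum_insert hi, Finset.prod_insert hi,
      coeff_mul_of_X_pow_dvd (h a (Finset.mem_insert_self a s)) ?_, ih (fun i his => h i (Finset.mem_insert_of_mem his))]
    calc X ^ (∑ i ∈ s, d i) = ∏ i ∈ s, X ^ d i := by rw [Finset.prod_pow_eq_pow_sum]
    _ ∣ ∏ i ∈ s, f i := Finset.prod_dvd_prod_of_dvd _ _ (fun i his => h i (Finset.mem_insert_of_mem his))

lemma inj_fin_sum {n : ℕ} (r : Fin n → ℕ) (hr : Function.Injective r) :
    (∑ a : Fin n, (a : ℕ)) ≤ ∑ a : Fin n, r a ∧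
    ((∑ a : Fin n, r a) = (∑ a : Fin n, (a : ℕ)) →
      ∃ σ : Equiv.Perm (Fin n), ∀ a, r a = (σ a : ℕ)) := by
  classical
  set S : Finset ℕ := Finset.image r Finset.univ with hS
  have hcard : S.card = n := by
    rw [hS, Finset.card_image_of_injective _ hr, Finset.card_univ, Fintype.card_fin]
  set g := S.orderIsoOfFin hcard with hg
  set f : Fin n → ℕ := fun a => (g a : ℕ) with hf
  have hmono : StrictMono f := fun a b hab => by
    exact_mod_cast g.strictMono hab
  have hsum : ∑ a : Fin n, r a = ∑ a : Fin n, f a := by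
    have h1 : ∑ x ∈ S, x = ∑ a : Fin n, r a := by
      rw [hS, Finset.sum_image (fun x _ y _ hxy => hr hxy)]
    have h2 : ∑ x ∈ S, x = ∑ x : {x // x ∈ S}, (x : ℕ) := (Finset.sum_coe_sort S _).symm
    have h3 : ∑ x : {x // x ∈ S}, (x : ℕ) = ∑ a : Fin n, f a :=
      (Equiv.sum_comp g.toEquiv (fun x : {x // x ∈ S} => (x : ℕ))).symm
    rw [← h1, h2, h3]
  have hle : ∀ a : Fin n, (a : ℕ) ≤ f a := le_of_strictMono_fin hmono
  constructor
  · rw [hsum]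
    exact Finset.sum_le_sum (fun a _ => hle a)
  · intro he
    have hpt : ∀ a : Fin n, (a : ℕ) = f a := by
      have := (Finset.sum_eq_sum_iff_of_le (fun a (_ : a ∈ Finset.univ) => hle a)).mp
        (by rw [← hsum, he])
      exact fun a => this a (Finset.mem_univ a)
    have hlt : ∀ a : Fin n, r a < n := by
      intro a
      have hmem : r a ∈ S := Finset.mem_image_of_mem r (Finset.mem_univ a)
      have : r a = f (g.symm ⟨r a, hmem⟩) := by
        simp [hf]
      rw [this, ← hpt (g.symm ⟨r a, hmem⟩)]
      exact (g.symm ⟨r a, hmem⟩).2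
    set r' : Fin n → Fin n := fun a => ⟨r a, hlt a⟩ with hr'
    have hinj : Function.Injective r' := fun a b hab => hr (congrArg Fin.val hab)
    refine ⟨Equiv.ofBijective r' (Finite.injective_iff_bijective.mp hinj), fun a => rfl⟩

open Polynomial Finset

-- binomial polynomial basics
noncomputable def bpoly (k : ℕ) : ℚ[X] := Polynomial.C ((k.factorial : ℚ))⁻¹ * descPochhammer ℚ k

lemma bpoly_eval (k m : ℕ) :
    (bpoly k).eval (m : ℚ) = (m.choose k : ℚ) := by
  rw [bpoly]
  rw [eval_mul, eval_C, descPochhammer_eval_eq_descFactorial, Nat.descFactorial_eq_factorial_mul_choose]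
  push_cast
  rw [← mul_assoc, inv_mul_cancel₀ (by exact_mod_cast Nat.factorial_ne_zero k), one_mul]

lemma bpoly_natDegree_le (k : ℕ) :
    (bpoly k).natDegree ≤ k := by
  rw [bpoly]
  refine (natDegree_mul_le).trans ?_
  simp [descPochhammer_natDegree]

lemma bpoly_coeff_self (k : ℕ) :
    (bpoly k).coeff k = ((k.factorial : ℚ))⁻¹ := by
  rw [bpoly]
  have h1 : (descPochhammer ℚ k).coeff k = 1 := by
    have h2 := (monic_descPochhammer ℚ k).coeff_natDegree
    rwa [descPochhammer_natDegree] at h2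
  rw [coeff_C_mul, h1, mul_one]

noncomputable def upoly (L l : ℕ) : ℚ[X] := ∑ k ∈ Finset.range L, Polynomial.C ((bpoly k).coeff l) * X ^ k

lemma upoly_coeff {L l k : ℕ} (hk : k < L) : (upoly L l).coeff k = (bpoly k).coeff l := by
  rw [upoly, finset_sum_coeff]
  simp only [coeff_C_mul, coeff_X_pow]
  rw [Finset.sum_eq_single k]
  · simp
  · intro b _ hb; simp [Ne.symm hb]
  · intro hk'; exact absurd (Finset.mem_range.mpr hk) hk'

lemma upoly_dvd {L l : ℕ} (hl : l < L) : X ^ l ∣ upoly L l := by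
  rw [X_pow_dvd_iff]
  intro d hd
  rw [upoly_coeff (hd.trans hl)]
  exact coeff_eq_zero_of_natDegree_lt (lt_of_le_of_lt (bpoly_natDegree_le d) hd)

lemma upoly_coeff_self {L l : ℕ} (hl : l < L) : (upoly L l).coeff l = ((l.factorial : ℚ))⁻¹ := by
  rw [upoly_coeff hl, bpoly_coeff_self]

lemma upoly_expansion {L m : ℕ} (hm : m < L) :
    ((1 : ℚ[X]) + X) ^ m = ∑ l ∈ Finset.range L, Polynomial.C ((m : ℚ) ^ l) * upoly L l := by
  have hrhs : ∑ l ∈ Finset.range L, Polynomial.C ((m : ℚ) ^ l) * upoly L l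
      = ∑ k ∈ Finset.range L, Polynomial.C ((bpoly k).eval (m : ℚ)) * X ^ k := by
    simp only [upoly, Finset.mul_sum]
    rw [Finset.sum_comm]
    refine Finset.sum_congr rfl fun k hk => ?_
    have heval : (bpoly k).eval (m : ℚ) = ∑ l ∈ Finset.range L, (bpoly k).coeff l * (m : ℚ) ^ l :=
      eval_eq_sum_range' (lt_of_le_of_lt (bpoly_natDegree_le k) (Finset.mem_range.mp hk)) _
    rw [heval, map_sum, Finset.sum_mul]
    refine Finset.sum_congr rfl fun l _ => ?_
    rw [map_mul, mul_comm (Polynomial.C ((bpoly k).coeff l)) _]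
    ring
  rw [hrhs]
  have hlhs : ((1 : ℚ[X]) + X) ^ m = ∑ k ∈ Finset.range (m + 1), X ^ k * (m.choose k : ℚ[X]) := by
    rw [add_comm]
    have := add_pow (X : ℚ[X]) 1 m
    simpa using this
  rw [hlhs]
  rw [Finset.sum_subset (Finset.range_subset_range.mpr hm)]
  · refine Finset.sum_congr rfl fun k hk => ?_
    rw [bpoly_eval, Polynomial.C_eq_natCast]
    ring
  · intro k _ hk
    rw [Nat.choose_eq_zero_of_lt (by simpa using hk)]
    simp

lemma key_coeff {n L : ℕ} (hn : n ≤ L) (i j : Fin n → ℕ) (hiL : ∀ a b, i a * j b < L) :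
    (∀ k < ∑ a : Fin n, (a : ℕ),
      (Matrix.det (Matrix.of fun a b : Fin n => ((1 : ℚ[X]) + X) ^ (i a * j b))).coeff k = 0) ∧
    (Matrix.det (Matrix.of fun a b : Fin n => ((1 : ℚ[X]) + X) ^ (i a * j b))).coeff
        (∑ a : Fin n, (a : ℕ)) =
      (Matrix.det (Matrix.vandermonde fun a => (i a : ℚ))) *
      (Matrix.det (Matrix.vandermonde fun a => (j a : ℚ))) *
      ∏ a : Fin n, ((a : ℕ).factorial : ℚ)⁻¹ := by
  classical
  set N := ∑ a : Fin n, (a : ℕ) with hN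
  -- expand the determinant by multilinearity in the rows
  have hrow : ∀ a b : Fin n, ((1 : ℚ[X]) + X) ^ (i a * j b)
      = ∑ l ∈ Finset.range L, (Polynomial.C ((i a : ℚ) ^ l) * upoly L l) * Polynomial.C ((j b : ℚ) ^ l) := by
    intro a b
    rw [upoly_expansion (hiL a b)]
    refine Finset.sum_congr rfl fun l _ => ?_
    push_cast
    rw [mul_pow, map_mul]
    ring
  have hdet : (Matrix.det (Matrix.of fun a b : Fin n => ((1 : ℚ[X]) + X) ^ (i a * j b)))
      = ∑ r ∈ Fintype.piFinset (fun _ : Fin n => Finset.range L),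
        Matrix.det (Matrix.of fun a b : Fin n =>
          (Polynomial.C ((i a : ℚ) ^ (r a)) * upoly L (r a)) * Polynomial.C ((j b : ℚ) ^ (r a))) := by
    have key := (Matrix.detRowAlternating :
        (Fin n → ℚ[X]) [⋀^Fin n]→ₗ[ℚ[X]] ℚ[X]).toMultilinearMap.map_sum_finset
      (g := fun (a : Fin n) (l : ℕ) => fun b : Fin n =>
        (Polynomial.C ((i a : ℚ) ^ l) * upoly L l) * Polynomial.C ((j b : ℚ) ^ l))
      (A := fun _ : Fin n => Finset.range L)
    have hM : (Matrix.of fun a b : Fin n => ((1 : ℚ[X]) + X) ^ (i a * j b))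
        = fun a => ∑ l ∈ Finset.range L,
          (fun b : Fin n => (Polynomial.C ((i a : ℚ) ^ l) * upoly L l) * Polynomial.C ((j b : ℚ) ^ l)) := by
      funext a b
      rw [Finset.sum_apply]
      exact hrow a b
    rw [show (Matrix.det (Matrix.of fun a b : Fin n => ((1 : ℚ[X]) + X) ^ (i a * j b)))
      = (Matrix.detRowAlternating : (Fin n → ℚ[X]) [⋀^Fin n]→ₗ[ℚ[X]] ℚ[X])
        (Matrix.of fun a b : Fin n => ((1 : ℚ[X]) + X) ^ (i a * j b)) from rfl, hM]
    exact key
  set F : (Fin n → ℕ) → ℚ[X] := fun r =>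
    Matrix.det (Matrix.of fun a b : Fin n =>
      (Polynomial.C ((i a : ℚ) ^ (r a)) * upoly L (r a)) * Polynomial.C ((j b : ℚ) ^ (r a))) with hF
  set d : (Fin n → ℕ) → ℚ := fun r =>
    Matrix.det (Matrix.of fun a b : Fin n => (j b : ℚ) ^ (r a)) with hdd
  have hterm : ∀ r : Fin n → ℕ, F r =
      Polynomial.C ((∏ a, (i a : ℚ) ^ (r a)) * d r) * ∏ a, upoly L (r a) := by
    intro r
    have h1 := Matrix.det_mul_column (fun a => Polynomial.C ((i a : ℚ) ^ (r a)) * upoly L (r a))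
      (Matrix.of fun a b : Fin n => (Polynomial.C ((j b : ℚ) ^ (r a)) : ℚ[X]))
    have h2 : Matrix.det (Matrix.of fun a b : Fin n => (Polynomial.C ((j b : ℚ) ^ (r a)) : ℚ[X]))
        = Polynomial.C (d r) := by
      rw [show (Matrix.of fun a b : Fin n => (Polynomial.C ((j b : ℚ) ^ (r a)) : ℚ[X]))
        = (Polynomial.C : ℚ →+* ℚ[X]).mapMatrix
            (Matrix.of fun a b : Fin n => (j b : ℚ) ^ (r a)) from rfl]
      exact (RingHom.map_det _ _).symm
    have hM : (Matrix.of fun a b : Fin n =>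
        (Polynomial.C ((i a : ℚ) ^ (r a)) * upoly L (r a)) * Polynomial.C ((j b : ℚ) ^ (r a)))
        = Matrix.of fun a b : Fin n =>
          (fun a' => Polynomial.C ((i a' : ℚ) ^ (r a')) * upoly L (r a')) a *
            (Matrix.of fun a' b' : Fin n => (Polynomial.C ((j b' : ℚ) ^ (r a')) : ℚ[X])) a b := rfl
    rw [hF]
    simp only []
    rw [hM, h1, h2, Finset.prod_mul_distrib, ← map_prod, map_mul]
    ring
  have hcoeffterm : ∀ (r : Fin n → ℕ) (k : ℕ), (F r).coeff k
      = ((∏ a, (i a : ℚ) ^ (r a)) * d r) * (∏ a, upoly L (r a)).coeff k := by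
    intro r k
    rw [hterm r, coeff_C_mul]
  have hnoninj : ∀ r : Fin n → ℕ, ¬ Function.Injective r → d r = 0 := by
    intro r hr
    rw [Function.not_injective_iff] at hr
    obtain ⟨a, b, hab, hne⟩ := hr
    refine Matrix.det_zero_of_row_eq hne ?_
    funext c
    simp [hab]
  have hdvd : ∀ r : Fin n → ℕ, (∀ a, r a < L) → X ^ (∑ a, r a) ∣ ∏ a, upoly L (r a) := by
    intro r hr
    rw [← Finset.prod_pow_eq_pow_sum]
    exact Finset.prod_dvd_prod_of_dvd _ _ fun a _ => upoly_dvd (hr a)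
  have hmemL : ∀ r ∈ Fintype.piFinset (fun _ : Fin n => Finset.range L), ∀ a, r a < L := by
    intro r hr a
    exact Finset.mem_range.mp (Fintype.mem_piFinset.mp hr a)
  constructor
  · -- low coefficients vanish
    intro k hk
    rw [hdet, finset_sum_coeff]
    refine Finset.sum_eq_zero fun r hr => ?_
    rw [hcoeffterm]
    by_cases hinj : Function.Injective r
    · have hge : N ≤ ∑ a, r a := (inj_fin_sum r hinj).1
      rw [X_pow_dvd_iff.mp (hdvd r (hmemL r hr)) k (lt_of_lt_of_le hk hge), mul_zero]
    · rw [hnoninj r hinj]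
      simp
  · -- the N-th coefficient
    rw [hdet, finset_sum_coeff]
    set e : Equiv.Perm (Fin n) → (Fin n → ℕ) := fun σ a => (σ a : ℕ) with he
    have hesub : Finset.image e Finset.univ ⊆ Fintype.piFinset (fun _ : Fin n => Finset.range L) := by
      intro r hr
      obtain ⟨σ, _, rfl⟩ := Finset.mem_image.mp hr
      exact Fintype.mem_piFinset.mpr fun a => Finset.mem_range.mpr (lt_of_lt_of_le (σ a).2 hn)
    have hvanish : ∀ r ∈ Fintype.piFinset (fun _ : Fin n => Finset.range L),
        r ∉ Finset.image e Finset.univ → (F r).coeff N = 0 := by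
      intro r hr hrE
      rw [hcoeffterm]
      by_cases hinj : Function.Injective r
      · have hge : N ≤ ∑ a, r a := (inj_fin_sum r hinj).1
        rcases eq_or_lt_of_le hge with heq | hlt
        · obtain ⟨σ, hσ⟩ := (inj_fin_sum r hinj).2 heq.symm
          exact absurd (Finset.mem_image.mpr ⟨σ, Finset.mem_univ σ, (funext hσ).symm⟩) hrE
        · rw [X_pow_dvd_iff.mp (hdvd r (hmemL r hr)) N hlt, mul_zero]
      · rw [hnoninj r hinj]
        simp
    rw [← Finset.sum_subset hesub hvanish]
    have heinj : ∀ x ∈ (Finset.univ : Finset (Equiv.Perm (Fin n))), ∀ y ∈ Finset.univ,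
        e x = e y → x = y := by
      intro σ _ τ _ hστ
      exact Equiv.ext fun a => Fin.val_injective (congrFun hστ a)
    rw [Finset.sum_image heinj]
    have hprodu : ∀ σ : Equiv.Perm (Fin n),
        ∏ a, upoly L ((σ a : ℕ)) = ∏ a : Fin n, upoly L (a : ℕ) :=
      fun σ => Equiv.prod_comp σ (fun a : Fin n => upoly L (a : ℕ))
    have hcN : (∏ a : Fin n, upoly L (a : ℕ)).coeff N = ∏ a : Fin n, ((a : ℕ).factorial : ℚ)⁻¹ := by
      rw [hN, coeff_prod_of_X_pow_dvd Finset.univ (fun a : Fin n => upoly L (a : ℕ))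
        (fun a => (a : ℕ)) (fun a _ => upoly_dvd (lt_of_lt_of_le a.2 hn))]
      exact Finset.prod_congr rfl fun a _ => upoly_coeff_self (lt_of_lt_of_le a.2 hn)
    set c : ℚ := ∏ a : Fin n, ((a : ℕ).factorial : ℚ)⁻¹ with hc
    set Vj : ℚ := Matrix.det (Matrix.vandermonde fun b => (j b : ℚ)) with hVj
    have hd : ∀ σ : Equiv.Perm (Fin n), d (e σ) = ((Equiv.Perm.sign σ : ℤ) : ℚ) * Vj := by
      intro σ
      have h1 : (Matrix.of fun a b : Fin n => (j b : ℚ) ^ ((e σ) a))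
          = (Matrix.transpose (Matrix.vandermonde fun b => (j b : ℚ))).submatrix σ id := rfl
      rw [hdd]
      simp only []
      rw [h1, Matrix.det_permute, Matrix.det_transpose, ← hVj]
    have hVi : Matrix.det (Matrix.vandermonde fun a => (i a : ℚ))
        = ∑ σ : Equiv.Perm (Fin n), ((Equiv.Perm.sign σ : ℤ) : ℚ) * ∏ a, (i a : ℚ) ^ ((σ a : ℕ)) := by
      rw [← Matrix.det_transpose, Matrix.det_apply']
      exact Finset.sum_congr rfl fun σ _ => rfl
    calc ∑ σ : Equiv.Perm (Fin n), (F (e σ)).coeff N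
        = ∑ σ : Equiv.Perm (Fin n),
            (((Equiv.Perm.sign σ : ℤ) : ℚ) * ∏ a, (i a : ℚ) ^ ((σ a : ℕ))) * (Vj * c) := by
          refine Finset.sum_congr rfl fun σ _ => ?_
          rw [hcoeffterm, hprodu σ, hcN, hd σ]
          simp only [he]
          ring
      _ = _ := by
          rw [← Finset.sum_mul, ← hVi]
          ring

theorem chebotarev (p : ℕ) (hp : p.Prime) (ω : ℂ) (hω : IsPrimitiveRoot ω p)
    (I J : Finset ℕ) (hI : I ⊆ Finset.range p) (hJ : J ⊆ Finset.range p)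
    (h : I.card = J.card) :
    (Matrix.of fun a b : Fin I.card =>
      ω ^ ((I.orderIsoOfFin rfl a : ℕ) * (J.orderIsoOfFin h.symm b : ℕ))).det ≠ 0 := by
  intro h0
  haveI : Fact p.Prime := ⟨hp⟩
  set n := I.card with hn
  set i : Fin n → ℕ := fun a => ((I.orderIsoOfFin rfl a : ℕ)) with hi
  set j : Fin n → ℕ := fun b => ((J.orderIsoOfFin h.symm b : ℕ)) with hj
  have hilt : ∀ a, i a < p := fun a =>
    Finset.mem_range.mp (hI (I.orderIsoOfFin rfl a).2)
  have hjlt : ∀ b, j b < p := fun b =>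
    Finset.mem_range.mp (hJ (J.orderIsoOfFin h.symm b).2)
  have hiinj : Function.Injective i := by
    intro a b hab
    exact (I.orderIsoOfFin rfl).injective (Subtype.ext hab)
  have hjinj : Function.Injective j := by
    intro a b hab
    exact (J.orderIsoOfFin h.symm).injective (Subtype.ext hab)
  have hnp : n ≤ p := by
    rw [hn, ← Finset.card_range p]
    exact Finset.card_le_card hI
  set N := ∑ a : Fin n, (a : ℕ) with hN
  set Dz : ℤ[X] := Matrix.det (Matrix.of fun a b : Fin n => (X : ℤ[X]) ^ (i a * j b)) with hDz
  -- Step A : ω is a root of Dz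
  have hA : Polynomial.aeval ω Dz = 0 := by
    rw [hDz, show (Polynomial.aeval ω : ℤ[X] →ₐ[ℤ] ℂ)
        (Matrix.det (Matrix.of fun a b : Fin n => (X : ℤ[X]) ^ (i a * j b)))
      = ((Polynomial.aeval ω : ℤ[X] →ₐ[ℤ] ℂ) : ℤ[X] →+* ℂ)
        (Matrix.det (Matrix.of fun a b : Fin n => (X : ℤ[X]) ^ (i a * j b))) from rfl,
      RingHom.map_det]
    rw [show ((Polynomial.aeval ω : ℤ[X] →ₐ[ℤ] ℂ) : ℤ[X] →+* ℂ).mapMatrix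
        (Matrix.of fun a b : Fin n => (X : ℤ[X]) ^ (i a * j b))
      = Matrix.of fun a b : Fin n => ω ^ (i a * j b) by ext a b; simp]
    exact h0
  -- Step B : cyclotomic divides Dz
  have hB : Polynomial.cyclotomic p ℤ ∣ Dz := by
    have h1 : Polynomial.aeval ω (Dz.map (Int.castRingHom ℚ)) = 0 := by
      rw [show Int.castRingHom ℚ = algebraMap ℤ ℚ from rfl, aeval_map_algebraMap]
      exact hA
    have h2 : minpoly ℚ ω ∣ Dz.map (Int.castRingHom ℚ) := minpoly.dvd ℚ ω h1
    rw [← Polynomial.cyclotomic_eq_minpoly_rat hω hp.pos,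
      ← Polynomial.map_cyclotomic p (Int.castRingHom ℚ)] at h2
    exact (Polynomial.map_dvd_map (Int.castRingHom ℚ) Int.cast_injective
      (Polynomial.cyclotomic.monic p ℤ)).mp h2
  obtain ⟨Q, hQ⟩ := hB
  -- the key coefficient computation
  have hnL : n ≤ p * p := hnp.trans (Nat.le_mul_of_pos_left p hp.pos)
  have hijL : ∀ a b, i a * j b < p * p := fun a b =>
    Nat.mul_lt_mul'' (hilt a) (hjlt b)
  have key := key_coeff hnL i j hijL
  -- transfer to ℤ
  have hmap1 : Dz.map (Int.castRingHom ℚ)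
      = Matrix.det (Matrix.of fun a b : Fin n => (X : ℚ[X]) ^ (i a * j b)) := by
    rw [hDz, show (Matrix.det (Matrix.of fun a b : Fin n => (X : ℤ[X]) ^ (i a * j b))).map
        (Int.castRingHom ℚ)
      = (Polynomial.mapRingHom (Int.castRingHom ℚ))
        (Matrix.det (Matrix.of fun a b : Fin n => (X : ℤ[X]) ^ (i a * j b))) from rfl,
      RingHom.map_det]
    congr 1
    ext a b
    simp
  have hmapc : (Dz.comp (1 + X)).map (Int.castRingHom ℚ)
      = Matrix.det (Matrix.of fun a b : Fin n => ((1 : ℚ[X]) + X) ^ (i a * j b)) := by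
    rw [Polynomial.map_comp, hmap1]
    simp only [Polynomial.map_add, Polynomial.map_one, Polynomial.map_X]
    rw [show (Matrix.det (Matrix.of fun a b : Fin n => (X : ℚ[X]) ^ (i a * j b))).comp
        ((1 : ℚ[X]) + X)
      = (Polynomial.eval₂RingHom Polynomial.C ((1 : ℚ[X]) + X))
        (Matrix.det (Matrix.of fun a b : Fin n => (X : ℚ[X]) ^ (i a * j b))) from rfl,
      RingHom.map_det]
    congr 1
    ext a b
    simp
  have hlow : ∀ k < N, (Dz.comp (1 + X)).coeff k = 0 := by
    intro k hk
    have h1 := key.1 k hk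
    rw [← hmapc, Polynomial.coeff_map] at h1
    have h2 : (((Dz.comp (1 + X)).coeff k : ℤ) : ℚ) = 0 := h1
    exact_mod_cast h2
  have hXN : X ^ N ∣ Dz.comp (1 + X) := Polynomial.X_pow_dvd_iff.mpr hlow
  have hDc : Dz.comp (1 + X)
      = (Polynomial.cyclotomic p ℤ).comp (1 + X) * Q.comp (1 + X) := by
    rw [hQ, Polynomial.mul_comp]
  have hc0 : ((Polynomial.cyclotomic p ℤ).comp (1 + X)).coeff 0 = p := by
    rw [Polynomial.coeff_zero_eq_eval_zero, Polynomial.eval_comp]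
    simp [Polynomial.eval_one_cyclotomic_prime]
  have hnotdvd : ¬ (X ∣ (Polynomial.cyclotomic p ℤ).comp (1 + X)) := by
    rw [Polynomial.X_dvd_iff, hc0]
    exact_mod_cast hp.ne_zero
  have hXQ : X ^ N ∣ Q.comp (1 + X) :=
    Polynomial.prime_X.pow_dvd_of_dvd_mul_left N hnotdvd (hDc ▸ hXN)
  obtain ⟨R, hR⟩ := hXQ
  have hXmul : ∀ q : ℤ[X], (X ^ N * q).coeff N = q.coeff 0 := fun q => by
    simpa using Polynomial.coeff_X_pow_mul q N 0
  have hcoeffN : (Dz.comp (1 + X)).coeff N = p * R.coeff 0 := by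
    rw [hDc, hR, show (Polynomial.cyclotomic p ℤ).comp (1 + X) * (X ^ N * R)
      = X ^ N * ((Polynomial.cyclotomic p ℤ).comp (1 + X) * R) by ring,
      hXmul, Polynomial.mul_coeff_zero, hc0]
  -- the coefficient as Vandermonde products
  set Viz : ℤ := Matrix.det (Matrix.vandermonde fun a => (i a : ℤ)) with hViz
  set Vjz : ℤ := Matrix.det (Matrix.vandermonde fun b => (j b : ℤ)) with hVjz
  have hVicast : ((Viz : ℚ)) = Matrix.det (Matrix.vandermonde fun a => (i a : ℚ)) := by
    rw [hViz, show ((Matrix.det (Matrix.vandermonde fun a => (i a : ℤ)) : ℤ) : ℚ)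
      = (Int.castRingHom ℚ) (Matrix.det (Matrix.vandermonde fun a => (i a : ℤ))) from rfl,
      RingHom.map_det]
    congr 1
    ext a b
    simp [Matrix.vandermonde]
  have hVjcast : ((Vjz : ℚ)) = Matrix.det (Matrix.vandermonde fun b => (j b : ℚ)) := by
    rw [hVjz, show ((Matrix.det (Matrix.vandermonde fun b => (j b : ℤ)) : ℤ) : ℚ)
      = (Int.castRingHom ℚ) (Matrix.det (Matrix.vandermonde fun b => (j b : ℤ))) from rfl,
      RingHom.map_det]
    congr 1
    ext a b
    simp [Matrix.vandermonde]
  have hfac : ∀ a : Fin n, (((a : ℕ).factorial : ℚ)) ≠ 0 := fun a => by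
    exact_mod_cast (a : ℕ).factorial_ne_zero
  have hinteq : ((Dz.comp (1 + X)).coeff N) * (∏ a : Fin n, ((a : ℕ).factorial : ℤ))
      = Viz * Vjz := by
    have h1 : (((Dz.comp (1 + X)).coeff N : ℚ)) = (Viz : ℚ) * (Vjz : ℚ) *
        ∏ a : Fin n, ((a : ℕ).factorial : ℚ)⁻¹ := by
      have e1 : (((Dz.comp (1 + X)).coeff N : ℤ) : ℚ)
          = (Polynomial.map (Int.castRingHom ℚ) (Dz.comp (1 + X))).coeff N := by
        rw [Polynomial.coeff_map]; rfl
      rw [e1, hmapc, hVicast, hVjcast, hN]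
      exact key.2
    have h2 : (((Dz.comp (1 + X)).coeff N : ℚ)) * (∏ a : Fin n, ((a : ℕ).factorial : ℚ))
        = (Viz : ℚ) * (Vjz : ℚ) := by
      rw [h1, mul_assoc, ← Finset.prod_mul_distrib]
      rw [show ∏ a : Fin n, (((a : ℕ).factorial : ℚ))⁻¹ * (((a : ℕ).factorial : ℚ))
        = ∏ a : Fin n, (1 : ℚ) from Finset.prod_congr rfl fun a _ =>
          inv_mul_cancel₀ (hfac a)]
      simp
    exact_mod_cast h2
  have hpdvdVV : (p : ℤ) ∣ Viz * Vjz := by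
    rw [← hinteq, hcoeffN]
    exact ⟨R.coeff 0 * ∏ a : Fin n, ((a : ℕ).factorial : ℤ), by ring⟩
  -- derive the contradiction
  have hpZ : Prime ((p : ℤ)) := Nat.prime_iff_prime_int.mp hp
  have hfactor : ∀ (v : Fin n → ℕ), (∀ x, v x < p) → Function.Injective v →
      ¬ ((p : ℤ) ∣ Matrix.det (Matrix.vandermonde fun a => (v a : ℤ))) := by
    intro v hvlt hvinj hdvd
    rw [Matrix.det_vandermonde] at hdvd
    obtain ⟨a, _, hdvd2⟩ := (Prime.dvd_finset_prod_iff hpZ _).mp hdvd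
    obtain ⟨b, hb, hdvd3⟩ := (Prime.dvd_finset_prod_iff hpZ _).mp hdvd2
    have hne : (v b : ℤ) - (v a : ℤ) ≠ 0 := by
      intro heq
      have : v b = v a := by exact_mod_cast sub_eq_zero.mp heq
      exact absurd (hvinj this) (ne_of_gt (Finset.mem_Ioi.mp hb))
    have habs : |(v b : ℤ) - (v a : ℤ)| < p := by
      have h1 := hvlt a
      have h2 := hvlt b
      rw [abs_lt]
      constructor <;> omega
    exact hne (Int.eq_zero_of_abs_lt_dvd hdvd3 habs)
  rcases hpZ.dvd_mul.mp hpdvdVV with hdvd | hdvd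
  · exact hfactor i hilt hiinj hdvd
  · exact hfactor j hjlt hjinj hdvd
end

section
/- Let p be a prime and g(x) ∈ 𝔽_p[x] a nonzero polynomial of degree strictly less than p. For any nonzero element a ∈ 𝔽_p, the multiplicity of a as a root of g is strictly less than the number of nonzero coefficients of g. -/
/-! Induct on the degree. A factor `X` changes neither the multiplicity of `a ≠ 0` nor the
number of terms, so one may assume `g 0 ≠ 0`. Then differentiation deletes exactly the constant
term, since the indices `1, …, deg g < p` are nonzero in `𝔽_p`, and lowers the multiplicity of
`a` by at most one. -/

open Polynomial Finset

namespace Polynomial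

variable {R : Type*}

theorem card_support_X_mul [Semiring R] (p : R[X]) : #(X * p).support = #p.support := by
  have : (X * p).support = p.support.map (addRightEmbedding 1) := by
    ext (_ | n) <;> simp [coeff_X_mul]
  rw [this, card_map]

section IsDomain

variable [CommRing R] [IsDomain R]

theorem rootMultiplicity_X_mul {p : R[X]} (hp : p ≠ 0) {a : R} (ha : a ≠ 0) :
    (X * p).rootMultiplicity a = p.rootMultiplicity a := by
  rw [rootMultiplicity_mul (mul_ne_zero X_ne_zero hp),
    rootMultiplicity_eq_zero (by simpa using ha), zero_add]

theorem card_support_derivative {p : R[X]}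
    (hchar : ∀ n : ℕ, n ≠ 0 → n ≤ p.natDegree → (n : R) ≠ 0) :
    #(derivative p).support = #(p.support.erase 0) := by
  rw [show p.support.erase 0 = (derivative p).support.map (addRightEmbedding 1) from ?_,
    card_map]
  ext (_ | n)
  · simp
  · have hn : p.coeff (n + 1) ≠ 0 → ((n + 1 : ℕ) : R) ≠ 0 := fun h =>
      hchar _ n.succ_ne_zero (le_natDegree_of_ne_zero h)
    simp only [mem_erase, mem_support_iff, mem_map, addRightEmbedding_apply, coeff_derivative]
    constructor
    · rintro ⟨-, h⟩
      exact ⟨n, mul_ne_zero h (by exact_mod_cast hn h), rfl⟩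
    · rintro ⟨m, h, hm⟩
      obtain rfl : m = n := by omega
      exact ⟨Nat.succ_ne_zero _, left_ne_zero_of_mul h⟩

theorem derivative_ne_zero_of_natDegree_ne_zero {p : R[X]} (hp : p.natDegree ≠ 0)
    (hchar : ∀ n : ℕ, n ≠ 0 → n ≤ p.natDegree → (n : R) ≠ 0) : derivative p ≠ 0 := by
  have hmem : p.natDegree ∈ p.support.erase 0 :=
    mem_erase.2 ⟨hp, natDegree_mem_support_of_nonzero (by rintro rfl; simp at hp)⟩
  rw [← support_nonempty, ← card_pos, card_support_derivative hchar]
  exact card_pos.2 ⟨_, hmem⟩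

theorem rootMultiplicity_lt_card_support {p : R[X]} (hp : p ≠ 0) {a : R} (ha : a ≠ 0)
    (hchar : ∀ n : ℕ, n ≠ 0 → n ≤ p.natDegree → (n : R) ≠ 0) :
    p.rootMultiplicity a < #p.support := by
  induction hd : p.natDegree using Nat.strong_induction_on generalizing p with
  | _ d ih =>
  subst hd
  by_cases hroot : p.IsRoot a
  swap
  · rw [rootMultiplicity_eq_zero hroot]
    exact card_pos.2 (support_nonempty.2 hp)
  by_cases h0 : p.coeff 0 = 0
  · obtain ⟨q, rfl⟩ := X_dvd_iff.2 h0
    have hq : q ≠ 0 := right_ne_zero_of_mul hp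
    rw [natDegree_X_mul hq] at ih hchar
    rw [rootMultiplicity_X_mul hq ha, card_support_X_mul]
    exact ih _ (Nat.lt_succ_self _) hq
      (fun n hn hle => hchar n hn (hle.trans (Nat.le_succ _))) rfl
  · have hd : p.natDegree ≠ 0 := fun hd => h0 <| by
      rwa [eq_C_of_natDegree_eq_zero hd, IsRoot, eval_C] at hroot
    have hp' := derivative_ne_zero_of_natDegree_ne_zero hd hchar
    have hlt := natDegree_derivative_lt hd
    have hcard : #(derivative p).support + 1 = #p.support := by
      rw [card_support_derivative hchar, card_erase_add_one (mem_support_iff.2 h0)]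
    have hih := ih _ hlt hp' (fun n hn hle => hchar n hn (hle.trans hlt.le)) rfl
    have hmult := rootMultiplicity_sub_one_le_derivative_rootMultiplicity_of_ne_zero p a hp'
    omega

end IsDomain

end Polynomial

theorem mult_lt_support (p : ℕ) (hp : p.Prime) (g : Polynomial (ZMod p))
    (hg : g ≠ 0) (hdeg : g.natDegree < p) (a : ZMod p) (ha : a ≠ 0) :
    g.rootMultiplicity a < g.support.card := by
  have : Fact p.Prime := ⟨hp⟩
  refine rootMultiplicity_lt_card_support hg ha fun n hn hle => ?_
  rw [Ne, ZMod.natCast_eq_zero_iff]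
  exact Nat.not_dvd_of_pos_of_lt (Nat.pos_of_ne_zero hn) (hle.trans_lt hdeg)
end

section
/- Let p be a prime and g(x) ∈ 𝔽_p[x] a nonzero polynomial of degree strictly less than p. Then the multiplicity of 1 as a root of g is strictly less than the number of nonzero coefficients of g. -/
/-!
Let `m` be the multiplicity of `a ≠ 0` as a root of `g` and let `k` be any exponent in the support
of `g`. The Euler-type operator `g ↦ X g' - k g` multiplies the `i`-th coefficient by `i - k`:
it kills the monomial of degree `k`, keeps every other monomial as long as the exponents of `g`
stay distinct in the coefficient ring (true in `𝔽_p` when `deg g < p`), and lowers the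
multiplicity of `a` by at most one. Induction on the size of the support then gives `m < #supp g`,
the base case being a single monomial, which does not vanish at `a`.
-/

open Polynomial Finset

namespace Polynomial

variable {R : Type*} [CommRing R]

theorem coeff_X_mul_derivative_sub_C_mul (g : R[X]) (k n : ℕ) :
    (X * derivative g - C (k : R) * g).coeff n = ((n : R) - k) * g.coeff n := by
  cases n with
  | zero => simp
  | succ n => simp [coeff_X_mul, coeff_derivative, sub_mul, mul_comm]

theorem rootMultiplicity_sub_one_le_rootMultiplicity_X_mul_derivative_sub_C_mul
    {g : R[X]} (a c : R) (h : X * derivative g - C c * g ≠ 0) :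
    g.rootMultiplicity a - 1 ≤ (X * derivative g - C c * g).rootMultiplicity a := by
  rw [le_rootMultiplicity_iff h]
  have hg := g.pow_rootMultiplicity_dvd a
  exact ((pow_sub_one_dvd_derivative_of_pow_dvd hg).mul_left X).sub
    (((pow_dvd_pow _ (Nat.sub_le _ 1)).trans hg).mul_left (C c))

theorem rootMultiplicity_C_mul_X_pow_eq_zero [IsDomain R] {a c : R} (ha : a ≠ 0) (k : ℕ) :
    (C c * X ^ k).rootMultiplicity a = 0 := by
  by_cases hc : c = 0
  · simp [hc]
  · exact rootMultiplicity_eq_zero (by simp [hc, ha])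

theorem rootMultiplicity_lt_card_support_s3 [IsDomain R] {a : R} (ha : a ≠ 0) {g : R[X]}
    (hg : g ≠ 0) (hinj : Set.InjOn (Nat.cast : ℕ → R) g.support) :
    g.rootMultiplicity a < #g.support := by
  induction hs : #g.support using Nat.strong_induction_on generalizing g with
  | _ s ih =>
  have hs_pos : 0 < s := hs ▸ card_pos.2 (support_nonempty.2 hg)
  obtain hs_one | hs_two : s = 1 ∨ 1 < s := by omega
  · obtain ⟨k, c, -, rfl⟩ := card_support_eq_one.1 (hs.trans hs_one)
    rw [rootMultiplicity_C_mul_X_pow_eq_zero ha]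
    exact hs_pos
  obtain ⟨i, hi, k, hk, hik⟩ := one_lt_card.1 (hs ▸ hs_two)
  set h := X * derivative g - C (k : R) * g
  have hsub : h.support ⊆ g.support.erase k := by
    intro n hn
    rw [mem_support_iff, coeff_X_mul_derivative_sub_C_mul] at hn
    refine mem_erase.2 ⟨?_, mem_support_iff.2 (right_ne_zero_of_mul hn)⟩
    rintro rfl
    simp at hn
  have hh : h ≠ 0 := by
    refine support_nonempty.1 ⟨i, mem_support_iff.2 ?_⟩
    rw [coeff_X_mul_derivative_sub_C_mul]
    exact mul_ne_zero (sub_ne_zero.2 fun hc => hik (hinj hi hk hc)) (mem_support_iff.1 hi)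
  have hcard : #h.support < s := hs ▸ (card_le_card hsub).trans_lt (card_erase_lt_of_mem hk)
  have hlt := ih _ hcard hh (hinj.mono fun n hn => mem_of_mem_erase (hsub hn)) rfl
  have hle : g.rootMultiplicity a - 1 ≤ h.rootMultiplicity a :=
    rootMultiplicity_sub_one_le_rootMultiplicity_X_mul_derivative_sub_C_mul a _ hh
  omega

end Polynomial

theorem mult_one_lt_support (p : ℕ) (hp : p.Prime) (g : Polynomial (ZMod p))
    (hg : g ≠ 0) (hdeg : g.natDegree < p) :
    g.rootMultiplicity 1 < g.support.card := by
  have : Fact p.Prime := ⟨hp⟩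
  refine rootMultiplicity_lt_card_support_s3 one_ne_zero hg fun i hi j hj hij => ?_
  have hi' : i < p := (le_natDegree_of_mem_supp i hi).trans_lt hdeg
  have hj' : j < p := (le_natDegree_of_mem_supp j hj).trans_lt hdeg
  simpa [ZMod.natCast_eq_natCast_iff', Nat.mod_eq_of_lt hi', Nat.mod_eq_of_lt hj'] using hij
end

section
/- Let p be a prime and ω ∈ ℂ a primitive p-th root of unity. If I, J ⊆ {0,...,p-1} with |I| = |J|, and rational numbers a_j (j ∈ J) satisfy ∑_{j∈J} a_j ω^{ij} = 0 for every i ∈ I, then a_j = 0 for all j ∈ J. -/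
/-!
Put `f = ∑_{j ∈ J} a_j X^j ∈ ℚ[X]`, of degree `< p`. If some `i ∈ I` is nonzero, `ω^i` is a
primitive `p`-th root of unity and a root of `f`, so the cyclotomic polynomial
`Φ_p = 1 + X + ⋯ + X^{p-1}`, its minimal polynomial over `ℚ`, divides `f`; comparing degrees,
`f = c Φ_p`. If `c ≠ 0` this forces `J = {0, …, p-1}`, hence `I = {0, …, p-1}` by cardinality,
and the equation for `i = 0` reads `p c = 0`. If `I ⊆ {0}`, then `|J| ≤ 1` and the equation for
`i = 0` says `a_j = 0` directly.
-/

open Polynomial Finset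

namespace Polynomial

theorem coeff_cyclotomic_prime_of_lt {p : ℕ} [Fact p.Prime] {k : ℕ} (hk : k < p) :
    (cyclotomic p ℚ).coeff k = 1 := by
  simp [cyclotomic_prime, finsetSum_coeff, coeff_X_pow, hk]

theorem eq_C_mul_cyclotomic_prime_of_aeval_eq_zero {p : ℕ} [Fact p.Prime] {K : Type*} [Field K]
    [CharZero K] {ζ : K} (hζ : IsPrimitiveRoot ζ p) {f : ℚ[X]} (hdeg : f.natDegree < p)
    (hf : aeval ζ f = 0) : f = C f.leadingCoeff * cyclotomic p ℚ := by
  have hp : p.Prime := Fact.out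
  have hdvd : cyclotomic p ℚ ∣ f :=
    cyclotomic_eq_minpoly_rat hζ hp.pos ▸ minpoly.dvd ℚ ζ hf
  refine eq_leadingCoeff_mul_of_monic_of_dvd_of_natDegree_le (cyclotomic.monic p ℚ) hdvd ?_
  rw [natDegree_cyclotomic, Nat.totient_prime hp]
  omega

theorem coeff_eq_leadingCoeff_of_aeval_eq_zero {p : ℕ} [Fact p.Prime] {K : Type*} [Field K]
    [CharZero K] {ζ : K} (hζ : IsPrimitiveRoot ζ p) {f : ℚ[X]} (hdeg : f.natDegree < p)
    (hf : aeval ζ f = 0) {k : ℕ} (hk : k < p) : f.coeff k = f.leadingCoeff := by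
  nth_rw 1 [eq_C_mul_cyclotomic_prime_of_aeval_eq_zero hζ hdeg hf]
  rw [coeff_C_mul, coeff_cyclotomic_prime_of_lt hk, mul_one]

end Polynomial

theorem IsPrimitiveRoot.eq_range_and_eq_of_sum_rat_mul_pow_eq_zero {p : ℕ} [Fact p.Prime]
    {K : Type*} [Field K] [CharZero K] {ζ : K} (hζ : IsPrimitiveRoot ζ p) {J : Finset ℕ}
    (hJ : J ⊆ range p) {a : ℕ → ℚ} (h : ∑ j ∈ J, (a j : K) * ζ ^ j = 0) {j : ℕ} (hj : j ∈ J)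
    (haj : a j ≠ 0) : J = range p ∧ ∀ k ∈ J, a k = a j := by
  have hp : p.Prime := Fact.out
  set f : ℚ[X] := ∑ j ∈ J, C (a j) * X ^ j
  have hcoeff (k : ℕ) : f.coeff k = if k ∈ J then a k else 0 := by
    simp [f, finsetSum_coeff]
  have hdeg : f.natDegree < p :=
    (natDegree_sum_le_of_forall_le _ _ fun k hk => (natDegree_C_mul_X_pow_le _ _).trans
      (Nat.le_sub_one_of_lt (mem_range.1 (hJ hk)))).trans_lt (Nat.sub_lt hp.pos one_pos)
  have hf : aeval ζ f = 0 := by simpa [f] using h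
  have hconst (k : ℕ) (hk : k < p) : f.coeff k = a j := by
    rw [coeff_eq_leadingCoeff_of_aeval_eq_zero hζ hdeg hf hk,
      ← coeff_eq_leadingCoeff_of_aeval_eq_zero hζ hdeg hf (mem_range.1 (hJ hj)), hcoeff, if_pos hj]
  refine ⟨Subset.antisymm hJ fun k hk => ?_, fun k hk => ?_⟩
  · by_contra hkJ
    have := hconst k (mem_range.1 hk)
    rw [hcoeff, if_neg hkJ] at this
    exact haj this.symm
  · simpa [hcoeff, hk] using hconst k (mem_range.1 (hJ hk))

theorem rat_coeffs_zero (p : ℕ) (hp : p.Prime) (ω : ℂ) (hω : IsPrimitiveRoot ω p)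
    (I J : Finset ℕ) (hI : I ⊆ Finset.range p) (hJ : J ⊆ Finset.range p)
    (hcard : I.card = J.card) (a : ℕ → ℚ)
    (hvan : ∀ i ∈ I, ∑ j ∈ J, (a j : ℂ) * ω ^ (i * j) = 0) :
    ∀ j ∈ J, a j = 0 := by
  intro j hj
  by_contra haj
  by_cases hI0 : ∃ i ∈ I, i ≠ 0
  · obtain ⟨i, hi, hi0⟩ := hI0
    have := Fact.mk hp
    have hprim : IsPrimitiveRoot (ω ^ i) p :=
      hω.pow_of_coprime i (Nat.coprime_of_lt_prime hi0 (mem_range.1 (hI hi)) hp).symm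
    obtain ⟨hJp, hconst⟩ := hprim.eq_range_and_eq_of_sum_rat_mul_pow_eq_zero hJ
      (by simpa only [pow_mul] using hvan i hi) hj haj
    have hIp : I = range p := eq_of_subset_of_card_le hI (by simp [hcard, hJp])
    have hsum := hvan 0 (hIp ▸ mem_range.2 hp.pos)
    rw [sum_congr rfl fun k hk => by rw [hconst k hk, zero_mul, pow_zero, mul_one], sum_const,
      hJp, card_range, nsmul_eq_mul] at hsum
    simp [hp.ne_zero, haj] at hsum
  · push Not at hI0
    have hIsub : I ⊆ {0} := fun i hi => mem_singleton.2 (hI0 i hi)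
    have hJj : J = {j} := eq_singleton_iff_unique_mem.2
      ⟨hj, fun k hk => card_le_one.1 (hcard ▸ card_le_card hIsub) k hk j hj⟩
    obtain ⟨i, hi⟩ : I.Nonempty := card_pos.1 (hcard ▸ card_pos.2 ⟨j, hj⟩)
    simpa [hJj, haj] using hvan 0 (hI0 i hi ▸ hi)
end

section
/- Let p be a prime and ω ∈ ℂ a primitive p-th root of unity. If I, J ⊆ {0,...,p-1} with |I| = |J|, and elements a_j ∈ ℤ[ω] (j ∈ J) satisfy ∑_{j∈J} a_j ω^{ij} = 0 for every i ∈ I, then all a_j are divisible by 1 - ω in ℤ[ω]. -/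
open Polynomial

lemma theta_dvd {Q : Type*} [CommRing Q] (c : Q) (f : Q[X]) (k : ℕ)
    (h : (X - 1) ^ (k + 1) ∣ f) : (X - 1) ^ k ∣ X * derivative f - C c * f := by
  obtain ⟨g, rfl⟩ := h
  refine ⟨(k + 1 : Q[X]) * (X * g) + (X - 1) * (X * derivative g - C c * g), ?_⟩
  rw [derivative_mul, derivative_pow, derivative_sub, derivative_X, derivative_one]
  simp only [Nat.add_sub_cancel, C_eq_natCast]
  push_cast
  ring

lemma key_vanish {Q : Type*} [CommRing Q] (S : Finset ℕ) (b : ℕ → Q)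
    (hdvd : (X - 1) ^ S.card ∣ ∑ j ∈ S, C (b j) * X ^ j) :
    ∀ j0 ∈ S, (∏ j ∈ S.erase j0, ((j0 : Q) - (j : Q))) * b j0 = 0 := by
  classical
  induction S using Finset.strongInduction generalizing b with
  | _ S ih =>
    intro j0 hj0
    rcases Finset.eq_empty_or_nonempty (S.erase j0) with he | ⟨j1, hj1⟩
    · -- S = {j0}
      have hS : S = {j0} := by
        rcases (Finset.erase_eq_empty_iff S j0).mp he with h | h
        · exact absurd (h ▸ hj0) (Finset.notMem_empty j0)
        · exact h
      subst hS
      simp only [Finset.sum_singleton, Finset.card_singleton, pow_one] at hdvd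
      obtain ⟨g, hg⟩ := hdvd
      have := congrArg (eval 1) hg
      simpa using this
    · -- inductive step, apply theta - j1
      have hj1S : j1 ∈ S := Finset.mem_of_mem_erase hj1
      have hj1ne : j1 ≠ j0 := Finset.ne_of_mem_erase hj1
      set b' : ℕ → Q := fun j => ((j : Q) - (j1 : Q)) * b j with hb'
      have hcard : (S.erase j1).card + 1 = S.card := Finset.card_erase_add_one hj1S
      have hth : (X - 1) ^ (S.erase j1).card ∣
          X * derivative (∑ j ∈ S, C (b j) * X ^ j) - C ((j1 : Q)) * ∑ j ∈ S, C (b j) * X ^ j := by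
        apply theta_dvd
        rwa [hcard]
      have heq : X * derivative (∑ j ∈ S, C (b j) * X ^ j) - C ((j1 : Q)) * ∑ j ∈ S, C (b j) * X ^ j
          = ∑ j ∈ S.erase j1, C (b' j) * X ^ j := by
        have hterm : ∀ j ∈ S, X * derivative (C (b j) * X ^ j) - C ((j1:Q)) * (C (b j) * X ^ j)
            = C (b' j) * X ^ j := by
          intro j hj
          rcases Nat.eq_zero_or_pos j with rfl | hpos
          · simp [hb']
          · rw [derivative_C_mul_X_pow]
            have hx : X * (C (b j * j) * X ^ (j - 1)) = C (b j * j) * X ^ j := by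
              rw [mul_comm X, mul_assoc, ← pow_succ, Nat.sub_add_cancel hpos]
            rw [hx, hb']
            simp only [C_sub, C_mul]
            ring
        rw [derivative_sum, Finset.mul_sum, Finset.mul_sum, ← Finset.sum_sub_distrib,
          Finset.sum_congr rfl hterm]
        exact (Finset.sum_erase S (by simp [hb'])).symm
      rw [heq] at hth
      have := ih (S.erase j1) (Finset.erase_ssubset hj1S) b' hth j0
        (Finset.mem_erase.mpr ⟨Ne.symm hj1ne, hj0⟩)
      -- this : (∏ j ∈ (S.erase j1).erase j0, ((j0:Q) - j)) * b' j0 = 0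
      rw [Finset.erase_right_comm] at this
      have hj1' : j1 ∈ S.erase j0 := Finset.mem_erase.mpr ⟨hj1ne, hj1S⟩
      calc (∏ j ∈ S.erase j0, ((j0 : Q) - (j : Q))) * b j0
          = (((j0:Q) - j1) * ∏ j ∈ (S.erase j0).erase j1, ((j0 : Q) - (j : Q))) * b j0 := by
            rw [Finset.mul_prod_erase (S.erase j0) (fun j => ((j0:Q) - (j:Q))) hj1']
        _ = (∏ j ∈ (S.erase j0).erase j1, ((j0 : Q) - (j : Q))) * b' j0 := by rw [hb']; ring
        _ = 0 := this

lemma prod_roots_dvd {R : Type*} [CommRing R] [IsDomain R] (s : Finset ℕ) (r : ℕ → R)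
    (hinj : ∀ i ∈ s, ∀ j ∈ s, r i = r j → i = j) (f : R[X])
    (h : ∀ i ∈ s, f.eval (r i) = 0) : (∏ i ∈ s, (X - C (r i))) ∣ f := by
  classical
  induction s using Finset.induction_on generalizing f with
  | empty => simpa using one_dvd f
  | @insert i s his ih =>
    obtain ⟨g, hg⟩ := (dvd_iff_isRoot (p := f) (a := r i)).2 (h i (Finset.mem_insert_self i s))
    rw [Finset.prod_insert his, hg]
    refine mul_dvd_mul_left _ (ih (fun a ha b hb => hinj a (Finset.mem_insert_of_mem ha) b
      (Finset.mem_insert_of_mem hb)) g ?_)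
    intro j hj
    have hne : r j - r i ≠ 0 := by
      intro hz
      have := hinj j (Finset.mem_insert_of_mem hj) i (Finset.mem_insert_self i s)
        (sub_eq_zero.mp hz)
      exact his (this ▸ hj)
    have h0 : (r j - r i) * g.eval (r j) = 0 := by
      have := h j (Finset.mem_insert_of_mem hj)
      rw [hg] at this
      simpa [eval_mul] using this
    exact (mul_eq_zero.mp h0).resolve_left hne


lemma quotient_argument {R : Type*} [CommRing R] [IsDomain R] (p : ℕ) (hp : p.Prime)
    (ζ : R) (hpdvd : (1 - ζ) ∣ (p : R))
    (I J : Finset ℕ) (hI : I ⊆ Finset.range p) (hJ : J ⊆ Finset.range p)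
    (hcard : I.card = J.card) (a : ℕ → R)
    (heval : ∀ i ∈ I, (∑ j ∈ J, C (a j) * X ^ j).eval (ζ ^ i) = 0)
    (hinj : ∀ i ∈ I, ∀ i' ∈ I, ζ ^ i = ζ ^ i' → i = i') :
    ∀ j ∈ J, (1 - ζ) ∣ a j := by
  classical
  set Idl := Ideal.span {(1 : R) - ζ} with hIdl
  set q : R →+* (R ⧸ Idl) := Ideal.Quotient.mk Idl with hqdef
  have hqζ : q ζ = 1 := by
    have h0 : q (1 - ζ) = 0 := Ideal.Quotient.eq_zero_iff_mem.mpr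
      (Ideal.subset_span (Set.mem_singleton _))
    rw [RingHom.map_sub, RingHom.map_one, sub_eq_zero] at h0
    exact h0.symm
  have hp0 : ((p : ℕ) : R ⧸ Idl) = 0 := by
    have := (Ideal.Quotient.eq_zero_iff_dvd ((1:R) - ζ) (p : R)).mpr hpdvd
    rwa [map_natCast] at this
  have hunit : ∀ j0 ∈ Finset.range p, ∀ j ∈ Finset.range p, j0 ≠ j →
      IsUnit ((j0 : R ⧸ Idl) - (j : R ⧸ Idl)) := by
    intro j0 hj0 j hj hne
    rw [Finset.mem_range] at hj0 hj
    have hd0 : ((j0 : ℤ) - (j : ℤ)) ≠ 0 := sub_ne_zero.mpr (by exact_mod_cast hne)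
    have hndvd : ¬ ((p : ℤ) ∣ ((j0 : ℤ) - (j : ℤ))) := by
      intro hdvd
      apply hd0
      apply Int.eq_zero_of_dvd_of_natAbs_lt_natAbs hdvd
      simp only [Int.natAbs_natCast]
      omega
    have hcop : IsCoprime ((p : ℤ)) ((j0 : ℤ) - (j : ℤ)) :=
      ((Nat.prime_iff_prime_int.mp hp).coprime_iff_not_dvd).mpr hndvd
    obtain ⟨u, v, huv⟩ := hcop
    have := congrArg (fun z : ℤ => (z : R ⧸ Idl)) huv
    push_cast at this
    rw [hp0] at this
    refine IsUnit.of_mul_eq_one (v : R ⧸ Idl) ?_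
    rw [mul_comm]
    linear_combination this
  set f : R[X] := ∑ j ∈ J, C (a j) * X ^ j with hf
  have hdvdf : (∏ i ∈ I, (X - C (ζ ^ i))) ∣ f := by
    apply prod_roots_dvd
    · exact fun i hi i' hi' hee => hinj i hi i' hi' hee
    · exact heval
  have hmap := Polynomial.map_dvd q hdvdf
  rw [Polynomial.map_prod] at hmap
  have hprod : ∏ i ∈ I, Polynomial.map q (X - C (ζ ^ i)) = ((X : (R ⧸ Idl)[X]) - 1) ^ I.card := by
    rw [Finset.prod_congr rfl (g := fun _ => (X - 1 : (R ⧸ Idl)[X])) fun i _ => by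
      rw [Polynomial.map_sub, Polynomial.map_X, Polynomial.map_C, map_pow, hqζ, one_pow, C_1],
      Finset.prod_const]
  have hmapf : Polynomial.map q f = ∑ j ∈ J, C (q (a j)) * X ^ j := by
    rw [hf, Polynomial.map_sum]
    exact Finset.sum_congr rfl fun j _ => by
      rw [Polynomial.map_mul, Polynomial.map_C, Polynomial.map_pow, Polynomial.map_X]
  rw [hprod, hmapf, hcard] at hmap
  have hkey := key_vanish J (fun j => q (a j)) hmap
  intro j0 hj0
  have h0 := hkey j0 hj0
  have hu : IsUnit (∏ j ∈ J.erase j0, ((j0 : R ⧸ Idl) - (j : R ⧸ Idl))) := by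
    refine Finset.prod_induction _ IsUnit (fun _ _ => IsUnit.mul) isUnit_one fun j hj => ?_
    exact hunit j0 (hJ hj0) j (hJ (Finset.mem_of_mem_erase hj)) (Finset.ne_of_mem_erase hj).symm
  have : q (a j0) = 0 := (hu.mul_right_eq_zero).mp h0
  exact (Ideal.Quotient.eq_zero_iff_dvd _ _).mp this

theorem coeffs_dvd (p : ℕ) (hp : p.Prime) (ω : ℂ) (hω : IsPrimitiveRoot ω p)
    (I J : Finset ℕ) (hI : I ⊆ Finset.range p) (hJ : J ⊆ Finset.range p)
    (hcard : I.card = J.card) (a : ℕ → Algebra.adjoin ℤ {ω})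
    (hvan : ∀ i ∈ I, ∑ j ∈ J, (a j : ℂ) * ω ^ (i * j) = 0) :
    ∀ j ∈ J, ((1 : Algebra.adjoin ℤ {ω}) -
      ⟨ω, Algebra.subset_adjoin (Set.mem_singleton ω)⟩) ∣ a j := by
  classical
  set ζ : Algebra.adjoin ℤ {ω} := ⟨ω, Algebra.subset_adjoin (Set.mem_singleton ω)⟩ with hζ
  have hζω : (ζ : ℂ) = ω := rfl
  have hgeom : ∑ k ∈ Finset.range p, ζ ^ k = 0 := by
    apply Subtype.ext
    push_cast [hζω]
    exact hω.geom_sum_eq_zero hp.one_lt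
  have hpdvd : ((1 : Algebra.adjoin ℤ {ω}) - ζ) ∣ (p : Algebra.adjoin ℤ {ω}) := by
    have : (p : Algebra.adjoin ℤ {ω}) = ∑ k ∈ Finset.range p, (1 - ζ ^ k) := by
      rw [Finset.sum_sub_distrib, hgeom, sub_zero, Finset.sum_const, Finset.card_range,
        nsmul_eq_mul, mul_one]
    rw [this]
    exact Finset.dvd_sum fun k _ => by simpa using sub_dvd_pow_sub_pow 1 ζ k
  have heval : ∀ i ∈ I, (∑ j ∈ J, C (a j) * X ^ j).eval (ζ ^ i) = 0 := by
    intro i hi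
    have h1 : (∑ j ∈ J, C (a j) * X ^ j).eval (ζ ^ i) = ∑ j ∈ J, a j * ζ ^ (i * j) := by
      rw [eval_finset_sum]
      exact Finset.sum_congr rfl fun j _ => by rw [eval_mul, eval_C, eval_pow, eval_X, ← pow_mul]
    rw [h1]
    apply Subtype.ext
    push_cast [hζω]
    exact hvan i hi
  have hinj : ∀ i ∈ I, ∀ i' ∈ I, ζ ^ i = ζ ^ i' → i = i' := by
    intro i hi i' hi' hee
    have h2 : ω ^ i = ω ^ i' := by
      have h3 := congrArg Subtype.val hee
      push_cast [hζω] at h3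
      exact h3
    exact hω.pow_inj (Finset.mem_range.mp (hI hi)) (Finset.mem_range.mp (hI hi')) h2
  exact quotient_argument p hp ζ hpdvd I J hI hJ hcard a heval hinj
end

section
/- Let p be a prime and f : ℤ/pℤ → ℂ a function that is not identically zero. Then |supp f| + |supp f̂| ≥ p + 1, where f̂ is the (discrete) Fourier transform of f. -/
/-!
The heart of the matter is Chebotarev's theorem: for p prime and a primitive p-th root of unity ω,
every square minor `det (ω ^ (aᵢ bⱼ))` of the Fourier matrix, with distinct residues `aᵢ` and
distinct residues `bⱼ`, is nonzero. Granted this, if `|supp f| + |supp f̂| ≤ p`, pick `|supp f|`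
frequencies outside `supp f̂`; the minor on these rows and the columns `supp f` annihilates the
restriction of `f` to its support, so `f = 0`.

For Chebotarev, let `Q(X) = det (X ^ (aᵢ bⱼ)) ∈ ℤ[X]`. Expanding `X ^ n = (1 + (X - 1)) ^ n`, the
Taylor coefficients of `Q` at `1` are integer combinations of the alternating power sums
`∑_σ sgn σ (∑ᵢ a_σ(i) bᵢ) ^ m`. A multinomial expansion writes these through the determinants
`det (aₓ ^ c_y)`, which vanish unless the exponents `c` are distinct, hence have sum at least
`N = 0 + 1 + ⋯ + (k - 1)`. So `Q = (X - 1) ^ N R`, and only `c` a permutation of `0, …, k - 1`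
contributes to `R(1)`, giving `(∏ i!) R(1) = V(a) V(b)` with `V` the Vandermonde determinant.
If `Q(ω) = 0` then `R(ω) = 0`, so the cyclotomic polynomial `Φ_p` divides `R` and
`p = Φ_p(1)` divides `R(1)`, hence divides `V(a)` or `V(b)`: impossible for distinct residues.
-/

open Finset Equiv Matrix Polynomial

section Combinatorics

lemma Finset.sum_range_card_le_sum_id (s : Finset ℕ) : ∑ j ∈ range #s, j ≤ ∑ x ∈ s, x := by
  induction s using Finset.induction_on_max with
  | empty => simp
  | insert a s hlt ih =>
    have ha : a ∉ s := fun h => (hlt a h).false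
    have hcard : #s ≤ a := by
      simpa using card_le_card (fun x hx => mem_range.2 (hlt x hx) : s ⊆ range a)
    rw [card_insert_of_notMem ha, sum_insert ha, sum_range_succ]
    omega

lemma Finset.eq_range_of_sum_id_eq {s : Finset ℕ} (h : ∑ x ∈ s, x = ∑ j ∈ range #s, j) :
    s = range #s := by
  induction s using Finset.induction_on_max with
  | empty => simp
  | insert a s hlt ih =>
    have ha : a ∉ s := fun h => (hlt a h).false
    have hcard : #s ≤ a := by
      simpa using card_le_card (fun x hx => mem_range.2 (hlt x hx) : s ⊆ range a)
    have hs := s.sum_range_card_le_sum_id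
    rw [card_insert_of_notMem ha, sum_insert ha, sum_range_succ] at h
    rw [card_insert_of_notMem ha, show a = #s by omega, range_add_one]
    exact congrArg _ (ih (by omega))

variable {k : ℕ}

lemma sum_val_le_sum_of_injective {c : Fin k → ℕ} (hc : Function.Injective c) :
    ∑ i : Fin k, (i : ℕ) ≤ ∑ i, c i := by
  have h := (univ.image c).sum_range_card_le_sum_id
  rwa [card_image_of_injective _ hc, sum_image hc.injOn, card_univ, Fintype.card_fin,
    ← Fin.sum_univ_eq_sum_range (fun i => i)] at h

lemma exists_perm_eq_of_sum_eq {c : Fin k → ℕ} (hc : Function.Injective c)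
    (h : ∑ i, c i = ∑ i : Fin k, (i : ℕ)) : ∃ τ : Perm (Fin k), ∀ i, c i = τ i := by
  have himage : univ.image c = range k := by
    have := @eq_range_of_sum_id_eq (univ.image c)
    rw [card_image_of_injective _ hc, sum_image hc.injOn, card_univ, Fintype.card_fin,
      ← Fin.sum_univ_eq_sum_range (fun i => i)] at this
    exact this h
  have hlt (i : Fin k) : c i < k := mem_range.1 (himage ▸ mem_image_of_mem c (mem_univ i))
  let e : Fin k → Fin k := fun i => ⟨c i, hlt i⟩
  have he : Function.Injective e := fun i j hij => hc (congrArg Fin.val hij)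
  exact ⟨ofBijective e he.bijective_of_finite, fun i => rfl⟩

lemma sum_piAntidiag_eq_sum_perm {M : Type*} [AddCommMonoid M] (g : (Fin k → ℕ) → M)
    (hg : ∀ c, ¬ Function.Injective c → g c = 0) :
    ∑ c ∈ univ.piAntidiag (∑ i : Fin k, (i : ℕ)), g c =
      ∑ τ : Perm (Fin k), g fun i => τ i := by
  have hinj : Function.Injective fun (τ : Perm (Fin k)) (i : Fin k) => (τ i : ℕ) :=
    fun τ₁ τ₂ h => Equiv.ext fun i => Fin.ext (congrFun h i)
  rw [← sum_image hinj.injOn]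
  refine (sum_subset (fun c hc => ?_) fun c hc hcτ => ?_).symm
  · obtain ⟨τ, -, rfl⟩ := mem_image.1 hc
    exact mem_piAntidiag.2 ⟨Equiv.sum_comp τ (fun i : Fin k => (i : ℕ)), fun i _ => mem_univ i⟩
  · refine hg c fun hc' => hcτ ?_
    obtain ⟨τ, hτ⟩ := exists_perm_eq_of_sum_eq hc' (mem_piAntidiag.1 hc).1
    exact mem_image.2 ⟨τ, mem_univ τ, funext fun i => (hτ i).symm⟩

end Combinatorics

section AlternatingPowerSum

variable {R : Type*} [CommRing R] {k : ℕ}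

noncomputable def altPowerSum (a b : Fin k → R) (m : ℕ) : R :=
  ∑ σ : Perm (Fin k), (Perm.sign σ : ℤ) * (∑ i, a (σ i) * b i) ^ m

lemma det_of_pow_eq_zero_of_not_injective (a : Fin k → R) {c : Fin k → ℕ}
    (hc : ¬ Function.Injective c) : (of fun x y => a x ^ c y).det = 0 := by
  obtain ⟨y₁, y₂, hcy, hne⟩ : ∃ y₁ y₂, c y₁ = c y₂ ∧ y₁ ≠ y₂ := by
    simpa [Function.Injective] using hc
  exact det_zero_of_column_eq hne fun x => by simp [hcy]

lemma det_of_pow_perm (a : Fin k → R) (τ : Perm (Fin k)) :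
    (of fun x y => a x ^ (τ y : ℕ)).det = (Perm.sign τ : ℤ) * (vandermonde a).det :=
  det_permute' τ (vandermonde a)

lemma sum_sign_mul_prod_pow_perm (b : Fin k → R) :
    ∑ τ : Perm (Fin k), (Perm.sign τ : ℤ) * ∏ i, b i ^ (τ i : ℕ) = (vandermonde b).det := by
  rw [← det_transpose, det_apply']
  rfl

lemma altPowerSum_eq_sum_piAntidiag (a b : Fin k → R) (m : ℕ) :
    altPowerSum a b m = ∑ c ∈ univ.piAntidiag m,
      (Nat.multinomial univ c : R) * ((∏ i, b i ^ c i) * (of fun x y => a x ^ c y).det) := by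
  simp only [altPowerSum, sum_pow_eq_sum_piAntidiag, mul_sum, det_apply', mul_pow,
    prod_mul_distrib]
  rw [sum_comm]
  refine sum_congr rfl fun c _ => sum_congr rfl fun σ _ => ?_
  simp only [of_apply]
  ring

lemma altPowerSum_eq_zero (a b : Fin k → R) {m : ℕ} (hm : m < ∑ i : Fin k, (i : ℕ)) :
    altPowerSum a b m = 0 := by
  rw [altPowerSum_eq_sum_piAntidiag]
  refine sum_eq_zero fun c hc => ?_
  have hc : ¬ Function.Injective c := fun hinj =>
    (sum_val_le_sum_of_injective hinj).not_gt ((mem_piAntidiag.1 hc).1 ▸ hm)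
  rw [det_of_pow_eq_zero_of_not_injective a hc, mul_zero, mul_zero]

lemma prod_factorial_mul_altPowerSum (a b : Fin k → R) :
    (∏ i : Fin k, (i : ℕ).factorial : R) * altPowerSum a b (∑ i : Fin k, (i : ℕ)) =
      (∑ i : Fin k, (i : ℕ)).factorial * ((vandermonde a).det * (vandermonde b).det) := by
  rw [altPowerSum_eq_sum_piAntidiag, sum_piAntidiag_eq_sum_perm _ fun c hc => by
    rw [det_of_pow_eq_zero_of_not_injective a hc, mul_zero, mul_zero], mul_sum,
    ← sum_sign_mul_prod_pow_perm b, mul_sum, mul_sum]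
  refine sum_congr rfl fun τ _ => ?_
  have hmultinomial : (∏ i : Fin k, (i : ℕ).factorial) * Nat.multinomial univ (fun i => τ i) =
      (∑ i : Fin k, (i : ℕ)).factorial := by
    have h := Nat.multinomial_spec (s := univ) (f := fun i => (τ i : ℕ))
    rwa [Equiv.prod_comp τ fun i : Fin k => (i : ℕ).factorial,
      Equiv.sum_comp τ fun i : Fin k => (i : ℕ)] at h
  rw [det_of_pow_perm, ← hmultinomial]
  push_cast
  ring

lemma sum_sign_mul_eval_eq (a b : Fin k → R) {P : R[X]}
    (hP : P.natDegree ≤ ∑ i : Fin k, (i : ℕ)) :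
    ∑ σ : Perm (Fin k), (Perm.sign σ : ℤ) * P.eval (∑ i, a (σ i) * b i) =
      P.coeff (∑ i : Fin k, (i : ℕ)) * altPowerSum a b (∑ i : Fin k, (i : ℕ)) := by
  have hterm (t : ℕ) : ∑ σ : Perm (Fin k), (Perm.sign σ : ℤ) *
      (P.coeff t * (∑ i, a (σ i) * b i) ^ t) = P.coeff t * altPowerSum a b t := by
    rw [altPowerSum, mul_sum]
    exact sum_congr rfl fun σ _ => by ring
  simp only [eval_eq_sum_range' (Nat.lt_succ_of_le hP), mul_sum]
  rw [sum_comm, sum_range_succ, hterm, sum_eq_zero fun t ht => ?_, zero_add]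
  rw [hterm, altPowerSum_eq_zero a b (mem_range.1 ht), mul_zero]

end AlternatingPowerSum

section Chebotarev

variable {k : ℕ}

noncomputable def chebotarevPoly (a b : Fin k → ℕ) : ℤ[X] :=
  (of fun i j => (X : ℤ[X]) ^ (a i * b j)).det

lemma taylor_chebotarevPoly_coeff (a b : Fin k → ℕ) (m : ℕ) :
    (taylor 1 (chebotarevPoly a b)).coeff m =
      ∑ σ : Perm (Fin k), (Perm.sign σ : ℤ) * ((∑ i, a (σ i) * b i).choose m : ℤ) := by
  simp only [chebotarevPoly, det_apply', of_apply, prod_pow_eq_pow_sum, map_sum, finsetSum_coeff]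
  refine sum_congr rfl fun σ _ => ?_
  rw [← C_eq_intCast, taylor_mul, taylor_C, coeff_C_mul, taylor_X_pow, C_1, coeff_X_add_one_pow,
    Int.cast_id]

lemma factorial_mul_taylor_chebotarevPoly_coeff (a b : Fin k → ℕ) {m : ℕ}
    (hm : m ≤ ∑ i : Fin k, (i : ℕ)) :
    m.factorial * (taylor 1 (chebotarevPoly a b)).coeff m =
      (descPochhammer ℤ m).coeff (∑ i : Fin k, (i : ℕ)) *
        altPowerSum (fun i => (a i : ℤ)) (fun i => (b i : ℤ)) (∑ i : Fin k, (i : ℕ)) := by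
  have hchoose (n : ℕ) : (m.factorial * n.choose m : ℤ) = (descPochhammer ℤ m).eval (n : ℤ) := by
    rw [descPochhammer_eval_eq_descFactorial, Nat.descFactorial_eq_factorial_mul_choose]
    push_cast
    rfl
  rw [← sum_sign_mul_eval_eq _ _ ((descPochhammer_natDegree ℤ m).trans_le hm),
    taylor_chebotarevPoly_coeff, mul_sum]
  refine sum_congr rfl fun σ _ => ?_
  rw [mul_left_comm, hchoose]
  push_cast
  rfl

lemma taylor_chebotarevPoly_coeff_eq_zero (a b : Fin k → ℕ) {m : ℕ}
    (hm : m < ∑ i : Fin k, (i : ℕ)) : (taylor 1 (chebotarevPoly a b)).coeff m = 0 := by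
  have h := factorial_mul_taylor_chebotarevPoly_coeff a b hm.le
  rwa [coeff_eq_zero_of_natDegree_lt ((descPochhammer_natDegree ℤ m).trans_lt hm), zero_mul,
    mul_eq_zero, or_iff_right (by exact_mod_cast m.factorial_ne_zero)] at h

lemma prod_factorial_mul_taylor_chebotarevPoly_coeff (a b : Fin k → ℕ) :
    (∏ i : Fin k, (i : ℕ).factorial : ℤ) *
        (taylor 1 (chebotarevPoly a b)).coeff (∑ i : Fin k, (i : ℕ)) =
      (vandermonde fun i => (a i : ℤ)).det * (vandermonde fun i => (b i : ℤ)).det := by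
  set N := ∑ i : Fin k, (i : ℕ)
  have hlead : (descPochhammer ℤ N).coeff N = 1 := by
    simpa [descPochhammer_natDegree] using (monic_descPochhammer ℤ N).coeff_natDegree
  have h := factorial_mul_taylor_chebotarevPoly_coeff a b le_rfl
  rw [hlead, one_mul] at h
  refine mul_left_cancel₀ (by exact_mod_cast N.factorial_ne_zero : (N.factorial : ℤ) ≠ 0) ?_
  rw [mul_left_comm, h, prod_factorial_mul_altPowerSum]

lemma prime_dvd_taylor_coeff_of_aeval_eq_zero {K : Type*} [Field K] [CharZero K] {p : ℕ}
    (hp : p.Prime) {ω : K} (hω : IsPrimitiveRoot ω p) {Q : ℤ[X]} (hQ : aeval ω Q = 0) {N : ℕ}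
    (hN : ∀ m < N, (taylor 1 Q).coeff m = 0) : (p : ℤ) ∣ (taylor 1 Q).coeff N := by
  have : Fact p.Prime := ⟨hp⟩
  obtain ⟨S, hS⟩ := X_pow_dvd_iff.2 hN
  have hQS : Q = (X - 1) ^ N * taylor (-1) S := by
    rw [← taylor_zero Q, ← neg_add_cancel (1 : ℤ), ← taylor_taylor, hS, taylor_mul, taylor_X_pow,
      C_neg, C_1, sub_eq_add_neg]
  have hSω : aeval ω (taylor (-1) S) = 0 := by
    rw [hQS, map_mul, map_pow, map_sub, aeval_X, map_one] at hQ
    exact (mul_eq_zero.1 hQ).resolve_left (pow_ne_zero _ (sub_ne_zero.2 (hω.ne_one hp.one_lt)))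
  have hdvd : cyclotomic p ℤ ∣ taylor (-1) S := by
    rw [cyclotomic_eq_minpoly hω hp.pos]
    exact minpoly.isIntegrallyClosed_dvd (hω.isIntegral hp.pos) hSω
  have hcoeff : (taylor 1 Q).coeff N = (taylor (-1) S).eval 1 := by
    rw [hS, coeff_X_pow_mul', if_pos le_rfl, Nat.sub_self, taylor_eval, add_neg_cancel,
      coeff_zero_eq_eval_zero]
  rw [hcoeff, ← eval_one_cyclotomic_prime (R := ℤ)]
  exact eval_dvd hdvd

lemma not_dvd_det_vandermonde_val {p : ℕ} [Fact p.Prime] {α : Fin k → ZMod p}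
    (hα : Function.Injective α) : ¬ (p : ℤ) ∣ (vandermonde fun i => ((α i).val : ℤ)).det := by
  rw [← ZMod.intCast_zmod_eq_zero_iff_dvd, Int.cast_det]
  convert det_vandermonde_ne_zero_iff.2 hα
  ext i j
  simp [vandermonde_apply]

theorem det_pow_val_mul_val_ne_zero_of_fin {K : Type*} [Field K] [CharZero K] {p : ℕ}
    [hp : Fact p.Prime] {ω : K} (hω : IsPrimitiveRoot ω p) {α β : Fin k → ZMod p}
    (hα : Function.Injective α) (hβ : Function.Injective β) :
    (of fun i j => ω ^ ((α i).val * (β j).val)).det ≠ 0 := by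
  set a := fun i => (α i).val
  set b := fun j => (β j).val
  intro hdet
  have hQ : aeval ω (chebotarevPoly a b) = 0 := by
    rw [chebotarevPoly, AlgHom.map_det, ← hdet]
    congr 1
    ext i j
    simp [a, b]
  have hdvd := prime_dvd_taylor_coeff_of_aeval_eq_zero hp.out hω hQ
    fun m hm => taylor_chebotarevPoly_coeff_eq_zero a b hm
  replace hdvd := (prod_factorial_mul_taylor_chebotarevPoly_coeff a b) ▸ hdvd.mul_left _
  rcases (Nat.prime_iff_prime_int.1 hp.out).dvd_mul.1 hdvd with h | h
  exacts [not_dvd_det_vandermonde_val hα h, not_dvd_det_vandermonde_val hβ h]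

theorem det_pow_val_mul_val_ne_zero {K : Type*} [Field K] [CharZero K] {p : ℕ}
    [Fact p.Prime] {ω : K} (hω : IsPrimitiveRoot ω p) {ι : Type*} [Fintype ι] [DecidableEq ι]
    {α β : ι → ZMod p} (hα : Function.Injective α) (hβ : Function.Injective β) :
    (of fun i j => ω ^ ((α i).val * (β j).val)).det ≠ 0 := by
  let e := Fintype.equivFin ι
  rw [← det_submatrix_equiv_self e.symm]
  exact det_pow_val_mul_val_ne_zero_of_fin hω (hα.comp e.symm.injective) (hβ.comp e.symm.injective)

end Chebotarev

theorem eq_zero_of_sum_mul_pow_eq_zero {K : Type*} [Field K] [CharZero K] {p : ℕ}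
    [Fact p.Prime] {ω : K} (hω : IsPrimitiveRoot ω p) {f : ZMod p → K}
    {A B : Finset (ZMod p)} (hA : Function.support f ⊆ A) (hcard : #B = #A)
    (hB : ∀ k ∈ B, ∑ x, f x * ω ^ (k.val * x.val) = 0) : f = 0 := by
  let e : A ≃ B := Fintype.equivOfCardEq (by simpa using hcard.symm)
  let M : Matrix A A K := of fun i j => ω ^ ((e i : ZMod p).val * (j : ZMod p).val)
  have hM : M.det ≠ 0 := det_pow_val_mul_val_ne_zero hω
    (Subtype.val_injective.comp e.injective) Subtype.val_injective
  have hMf : M *ᵥ (fun j => f j) = 0 := by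
    ext i
    have hoff : ∀ x ∈ univ, x ∉ A → f x * ω ^ ((e i : ZMod p).val * x.val) = 0 :=
      fun x _ hx => by rw [Function.notMem_support.1 (mt (@hA x) hx), zero_mul]
    rw [Pi.zero_apply, ← hB _ (e i).2, ← sum_subset (subset_univ A) hoff, ← sum_coe_sort A]
    simp only [mulVec, dotProduct, M, of_apply, mul_comm]
  have hfA := eq_zero_of_mulVec_eq_zero hM hMf
  ext x
  by_contra hx
  exact hx (congrFun hfA ⟨x, hA hx⟩)

theorem uncertainty (p : ℕ) (hp : p.Prime) [NeZero p] (f : ZMod p → ℂ) (hf : f ≠ 0) :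
    p + 1 ≤ (Function.support f).ncard +
      (Function.support (fun k : ZMod p =>
        ∑ x : ZMod p, f x *
          Complex.exp (2 * Real.pi * Complex.I / p) ^ (k.val * x.val))).ncard := by
  classical
  have : Fact p.Prime := ⟨hp⟩
  set F := fun k : ZMod p => ∑ x : ZMod p, f x *
    Complex.exp (2 * Real.pi * Complex.I / p) ^ (k.val * x.val)
  by_contra! hlt
  rw [Set.ncard_eq_toFinset_card', Set.ncard_eq_toFinset_card'] at hlt
  obtain ⟨B, hB, hcard⟩ :
      ∃ B ⊆ (Function.support F).toFinsetᶜ, #B = #(Function.support f).toFinset := by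
    refine exists_subset_card_eq ?_
    rw [card_compl, ZMod.card]
    omega
  refine hf (eq_zero_of_sum_mul_pow_eq_zero (Complex.isPrimitiveRoot_exp p hp.ne_zero)
    (Set.coe_toFinset _).ge hcard fun k hk => ?_)
  simpa [F] using mem_compl.1 (hB hk)
end

section
/- Let p be a prime and g(x) ∈ 𝔽_p[x] a polynomial of degree strictly less than p. Then for each nonzero a ∈ 𝔽_p, if (x−a)^k divides g with k equal to the number of nonzero coefficients of g, then g = 0. -/
open Polynomial

private lemma aux_pow_support (p : ℕ) (hp : p.Prime) (a : ZMod p) (ha : a ≠ 0) :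
    ∀ n : ℕ, ∀ g : Polynomial (ZMod p), g.support.card ≤ n → g.natDegree < p →
      (Polynomial.X - Polynomial.C a) ^ g.support.card ∣ g → g = 0 := by
  haveI : Fact p.Prime := ⟨hp⟩
  intro n
  induction n with
  | zero =>
    intro g hcard _ _
    have : g.support = ∅ := Finset.card_eq_zero.mp (Nat.le_zero.mp hcard)
    exact Polynomial.support_eq_empty.mp this
  | succ n ih =>
    intro g hcard hdeg hdvd
    by_contra hg0
    set c := g.support.card with hc
    have hcpos : 0 < c := Finset.card_pos.mpr (Polynomial.nonempty_support_iff.mpr hg0)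
    set m := g.natTrailingDegree with hm
    -- X^m divides g
    have hXdvd : (X : Polynomial (ZMod p)) ^ m ∣ g := by
      rw [Polynomial.X_pow_dvd_iff]
      intro d hd
      exact Polynomial.coeff_eq_zero_of_lt_natTrailingDegree hd
    obtain ⟨h, hgh⟩ := hXdvd
    have hh0 : h.coeff 0 ≠ 0 := by
      have : g.coeff m ≠ 0 := Polynomial.coeff_natTrailingDegree_ne_zero.mpr hg0
      have h2 : g.coeff (0 + m) = h.coeff 0 := by
        rw [hgh]; exact Polynomial.coeff_X_pow_mul h m 0
      simpa using h2 ▸ (by simpa using this)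
    have hhne : h ≠ 0 := fun hh => hh0 (by simp [hh])
    -- coprimality
    have hcop : IsCoprime ((X : Polynomial (ZMod p)) ^ m)
        ((X - Polynomial.C a) ^ c) := by
      apply IsCoprime.pow
      refine ⟨Polynomial.C a⁻¹, -Polynomial.C a⁻¹, ?_⟩
      have : (Polynomial.C a⁻¹ : Polynomial (ZMod p)) * X +
          (-Polynomial.C a⁻¹) * (X - Polynomial.C a) = Polynomial.C (a⁻¹ * a) := by
        rw [Polynomial.C_mul]; ring
      rw [this, inv_mul_cancel₀ ha, Polynomial.C_1]
    have hdvdh : (X - Polynomial.C a) ^ c ∣ h := by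
      apply hcop.symm.dvd_of_dvd_mul_left
      rw [← hgh]; exact hdvd
    -- degree of h
    have hdegh : h.natDegree ≤ g.natDegree := by
      rw [hgh, Polynomial.natDegree_X_pow_mul]
      · exact Nat.le_add_right _ _
      · exact hhne
    -- support of h embeds into support of g
    have hcardh : h.support.card ≤ c := by
      apply Finset.card_le_card_of_injOn (fun i => i + m)
      · intro i hi
        simp only [Finset.mem_coe] at hi ⊢
        rw [Polynomial.mem_support_iff] at hi ⊢
        rwa [hgh, Polynomial.coeff_X_pow_mul]
      · intro x _ y _ hxy
        simpa using hxy
    have h0mem : (0 : ℕ) ∈ h.support := Polynomial.mem_support_iff.mpr hh0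
    -- derivative
    set h' := Polynomial.derivative h with hh'
    have hdvd' : (X - Polynomial.C a) ^ (c - 1) ∣ h' :=
      Polynomial.pow_sub_one_dvd_derivative_of_pow_dvd hdvdh
    have hcard' : h'.support.card ≤ c - 1 := by
      have hsub : h'.support.card ≤ (h.support.erase 0).card := by
        apply Finset.card_le_card_of_injOn (fun i => i + 1)
        · intro i hi
          simp only [Finset.mem_coe] at hi ⊢
          rw [Polynomial.mem_support_iff] at hi
          rw [Polynomial.coeff_derivative] at hi
          rw [Finset.mem_erase, Polynomial.mem_support_iff]
          exact ⟨Nat.succ_ne_zero i, fun hz => hi (by rw [hz, zero_mul])⟩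
        · intro x _ y _ hxy; simpa using hxy
      calc h'.support.card ≤ (h.support.erase 0).card := hsub
        _ = h.support.card - 1 := Finset.card_erase_of_mem h0mem
        _ ≤ c - 1 := Nat.sub_le_sub_right hcardh 1
    have hdvd'' : (X - Polynomial.C a) ^ h'.support.card ∣ h' :=
      dvd_trans (pow_dvd_pow _ hcard') hdvd'
    have hdeg' : h'.natDegree < p :=
      lt_of_le_of_lt (le_trans (Polynomial.natDegree_derivative_le h)
        (le_trans (Nat.sub_le _ _) hdegh)) hdeg
    have hcard'' : h'.support.card ≤ n :=
      le_trans hcard' (by omega)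
    have hz : h' = 0 := ih h' hcard'' hdeg' hdvd''
    -- h is a nonzero constant
    have hsupp : h.support ⊆ {0} := by
      intro i hi
      rw [Polynomial.mem_support_iff] at hi
      rw [Finset.mem_singleton]
      by_contra hi0
      obtain ⟨j, rfl⟩ := Nat.exists_eq_succ_of_ne_zero hi0
      have hco : h.coeff (j + 1) * (j + 1 : ℕ) = 0 := by
        have := Polynomial.coeff_derivative h j
        rw [← hh', hz] at this
        simpa using this.symm
      have hne : ((j + 1 : ℕ) : ZMod p) ≠ 0 := by
        rw [Ne, ZMod.natCast_eq_zero_iff]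
        intro hdvdp
        have hle : j + 1 ≤ h.natDegree := Polynomial.le_natDegree_of_ne_zero hi
        have hlt : j + 1 < p := lt_of_le_of_lt (le_trans hle hdegh) hdeg
        exact absurd (Nat.le_of_dvd (Nat.succ_pos j) hdvdp) (by omega)
      rcases mul_eq_zero.mp hco with h1 | h1
      · exact hi h1
      · exact hne h1
    have hdegh0 : h.natDegree = 0 := by
      have := Polynomial.natDegree_mem_support_of_nonzero hhne
      have := hsupp this
      simpa using this
    obtain ⟨cst, rfl⟩ := Polynomial.natDegree_eq_zero.mp hdegh0
    -- eval at a
    have heval : (Polynomial.C cst).eval a = 0 := by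
      have hd1 : (X - Polynomial.C a) ∣ Polynomial.C cst :=
        dvd_trans (dvd_pow_self _ hcpos.ne') hdvdh
      obtain ⟨q, hq⟩ := hd1
      rw [hq]; simp
    rw [Polynomial.eval_C] at heval
    exact hh0 (by simpa using heval)

theorem pow_support_dvd_imp_zero (p : ℕ) (hp : p.Prime) (g : Polynomial (ZMod p))
    (hdeg : g.natDegree < p) (a : ZMod p) (ha : a ≠ 0)
    (hdvd : (Polynomial.X - Polynomial.C a) ^ g.support.card ∣ g) :
    g = 0 := by
  exact aux_pow_support p hp a ha g.support.card g le_rfl hdeg hdvd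
end

section
/- Let p be a prime. The Vandermonde-type p × p matrix (ω^{ij})_{i,j=0}^{p-1}, where ω is a primitive p-th root of unity, is invertible, and moreover every square submatrix of it (obtained by selecting equal-size subsets of rows and columns) is invertible. -/
open MvPolynomial Polynomial Finset

variable {n : ℕ}

noncomputable def subXX (i j : Fin n) : MvPolynomial (Fin n) ℤ →ₐ[ℤ] MvPolynomial (Fin n) ℤ :=
  MvPolynomial.aeval (fun k => if k = i then MvPolynomial.X j else MvPolynomial.X k)

@[simp] lemma subXX_X_same (i j : Fin n) : subXX i j (MvPolynomial.X i) = MvPolynomial.X j := by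
  simp [subXX]

@[simp] lemma subXX_X_other {i k : Fin n} (j : Fin n) (hk : k ≠ i) :
    subXX i j (MvPolynomial.X k) = MvPolynomial.X k := by simp [subXX, hk]

lemma dvd_of_subXX {i j : Fin n} (hij : j ≠ i) {P : MvPolynomial (Fin n) ℤ}
    (h : subXX i j P = 0) : (MvPolynomial.X i - MvPolynomial.X j) ∣ P := by
  classical
  let A := MvPolynomial (Fin n) ℤ
  let φ : A →ₐ[ℤ] Polynomial A :=
    MvPolynomial.aeval (fun k => if k = i then Polynomial.X else Polynomial.C (MvPolynomial.X k))
  have hroot : Polynomial.eval (MvPolynomial.X j) (φ P) = 0 := by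
    have hcomp : (Polynomial.evalRingHom (MvPolynomial.X j : A)).comp (φ : A →+* Polynomial A)
        = (subXX i j : A →+* A) := by
      apply MvPolynomial.ringHom_ext
      · intro r
        simp [φ, subXX, MvPolynomial.algHom_C]
      · intro k
        by_cases hk : k = i <;> simp only [RingHom.comp_apply, AlgHom.coe_toRingHom] <;> subst_eqs <;> rw [show φ = MvPolynomial.aeval (R := ℤ) (fun k => if k = i then Polynomial.X else Polynomial.C (MvPolynomial.X k)) from rfl, MvPolynomial.aeval_X] <;> simp_all [MvPolynomial.bind₁_X_right] <;> first | exact (subXX_X_same i j).symm | exact (subXX_X_other j (by assumption)).symm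
    calc Polynomial.eval (MvPolynomial.X j) (φ P)
        = ((Polynomial.evalRingHom (MvPolynomial.X j : A)).comp (φ : A →+* Polynomial A)) P := rfl
      _ = subXX i j P := by rw [hcomp]; rfl
      _ = 0 := h
  obtain ⟨G, hG⟩ := (Polynomial.dvd_iff_isRoot.mpr hroot :
    (Polynomial.X - Polynomial.C (MvPolynomial.X j)) ∣ φ P)
  have hback : ∀ Q : A, (Polynomial.aeval (MvPolynomial.X i : A)) (φ Q) = Q := by
    intro Q
    have : ((Polynomial.aeval (MvPolynomial.X i : A)).restrictScalars ℤ).comp φ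
        = AlgHom.id ℤ A := by
      apply MvPolynomial.algHom_ext
      intro k
      by_cases hk : k = i <;> simp only [AlgHom.comp_apply] <;> simp [φ, MvPolynomial.aeval_X, hk] <;> rfl
    calc (Polynomial.aeval (MvPolynomial.X i : A)) (φ Q)
        = (((Polynomial.aeval (MvPolynomial.X i : A)).restrictScalars ℤ).comp φ) Q := rfl
      _ = Q := by rw [this]; rfl
  refine ⟨(Polynomial.aeval (MvPolynomial.X i : A)) G, ?_⟩
  have := congrArg (Polynomial.aeval (MvPolynomial.X i : A)) hG
  rw [hback] at this
  simpa using this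

lemma prime_X_sub_X {i j : Fin n} (hij : j ≠ i) :
    Prime (MvPolynomial.X i - MvPolynomial.X j : MvPolynomial (Fin n) ℤ) := by
  classical
  constructor
  · intro h0
    have := sub_eq_zero.mp h0
    exact hij (MvPolynomial.X_injective this).symm
  constructor
  · intro hu
    have := hu.map (MvPolynomial.eval (fun _ => (0:ℤ)))
    simp at this
  · intro a b hab
    obtain ⟨c, hc⟩ := hab
    have h0 : subXX i j (a * b) = 0 := by
      have : subXX i j (MvPolynomial.X i - MvPolynomial.X j) = 0 := by
        simp [map_sub, subXX_X_same, subXX_X_other j hij]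
      rw [hc, map_mul, this, zero_mul]
    rw [map_mul] at h0
    rcases mul_eq_zero.mp h0 with h | h
    · exact Or.inl (dvd_of_subXX hij h)
    · exact Or.inr (dvd_of_subXX hij h)

lemma prod_primes_dvd' {R : Type*} [CommRing R] [IsDomain R] {ι : Type*} [DecidableEq ι]
    (s : Finset ι) (f : ι → R) (hp : ∀ i ∈ s, Prime (f i))
    (hnd : ∀ i ∈ s, ∀ j ∈ s, i ≠ j → ¬ f i ∣ f j) {z : R}
    (hdvd : ∀ i ∈ s, f i ∣ z) : (∏ i ∈ s, f i) ∣ z := by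
  classical
  induction s using Finset.induction_on with
  | empty => simpa using one_dvd z
  | @insert a s ha ih =>
    rw [Finset.prod_insert ha]
    have hfa : f a ∣ z := hdvd a (Finset.mem_insert_self a s)
    have hps : (∏ i ∈ s, f i) ∣ z := by
      refine ih (fun i hi => hp i (Finset.mem_insert_of_mem hi))
        (fun i hi j hj hij => hnd i (Finset.mem_insert_of_mem hi) j (Finset.mem_insert_of_mem hj) hij)
        (fun i hi => hdvd i (Finset.mem_insert_of_mem hi))
    obtain ⟨w, hw⟩ := hps
    have hpa : Prime (f a) := hp a (Finset.mem_insert_self a s)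
    have haw : f a ∣ w := by
      have : f a ∣ (∏ i ∈ s, f i) * w := hw ▸ hfa
      rcases hpa.dvd_mul.mp this with h | h
      · obtain ⟨b, hb, hdb⟩ := hpa.exists_mem_finset_dvd h
        exact absurd hdb (hnd a (Finset.mem_insert_self a s) b (Finset.mem_insert_of_mem hb)
          (fun hab => ha (hab ▸ hb)) )
      · exact h
    obtain ⟨u, hu⟩ := haw
    exact ⟨u, by rw [hw, hu]; ring⟩

def pairSet (n : ℕ) : Finset (Fin n × Fin n) := Finset.univ.filter (fun q => q.1 < q.2)

lemma prod_pairSet {R : Type*} [CommRing R] (g : Fin n → Fin n → R) :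
    ∏ q ∈ pairSet n, g q.1 q.2 = ∏ i : Fin n, ∏ j ∈ Finset.Ioi i, g i j := by
  classical
  rw [pairSet, Finset.prod_filter, ← Finset.univ_product_univ, Finset.prod_product]
  congr 1
  ext i
  simp only []
  rw [← Finset.prod_filter]
  congr 1
  ext j
  simp [Finset.mem_filter, Finset.mem_Ioi]


lemma subXX_det_eq_zero (b : Fin n → ℕ) {q : Fin n × Fin n} (hq : q.1 < q.2) :
    subXX q.2 q.1 (Matrix.of fun i j : Fin n => (MvPolynomial.X i : MvPolynomial (Fin n) ℤ) ^ b j).det = 0 := by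
  classical
  rw [show (subXX q.2 q.1) (Matrix.of fun i j : Fin n => (MvPolynomial.X i : MvPolynomial (Fin n) ℤ) ^ b j).det
    = ((Matrix.of fun i j : Fin n => (MvPolynomial.X i : MvPolynomial (Fin n) ℤ) ^ b j).map (subXX q.2 q.1)).det
    from RingHom.map_det _ _]
  apply Matrix.det_zero_of_row_eq (i := q.1) (j := q.2) hq.ne
  funext c
  simp only [Matrix.map_apply, Matrix.of_apply, map_pow]
  rw [subXX_X_other q.1 hq.ne, subXX_X_same]

lemma vandermonde_dvd_det (b : Fin n → ℕ) :
    (∏ q ∈ pairSet n, (MvPolynomial.X q.2 - MvPolynomial.X q.1 : MvPolynomial (Fin n) ℤ)) ∣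
      (Matrix.of fun i j : Fin n => (MvPolynomial.X i : MvPolynomial (Fin n) ℤ) ^ b j).det := by
  classical
  apply prod_primes_dvd'
  · intro q hq
    have hq' : q.1 < q.2 := (Finset.mem_filter.mp hq).2
    exact prime_X_sub_X hq'.ne
  · intro q hq q' hq' hne hdvd
    have h1 : q.1 < q.2 := (Finset.mem_filter.mp hq).2
    have h2 : q'.1 < q'.2 := (Finset.mem_filter.mp hq').2
    have h0 : subXX q.2 q.1 (MvPolynomial.X q'.2 - MvPolynomial.X q'.1) = 0 := by
      obtain ⟨c, hc⟩ := hdvd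
      rw [hc, map_mul, map_sub, subXX_X_same, subXX_X_other q.1 h1.ne, sub_self, zero_mul]
    rw [map_sub] at h0
    have key : ∀ r : Fin n, subXX q.2 q.1 (MvPolynomial.X r)
        = MvPolynomial.X (if r = q.2 then q.1 else r) := by
      intro r
      by_cases hr : r = q.2
      · rw [hr, subXX_X_same, if_pos rfl]
      · rw [subXX_X_other _ hr, if_neg hr]
    rw [key, key] at h0
    have heq := MvPolynomial.X_injective (sub_eq_zero.mp h0)
    by_cases ha : q'.2 = q.2 <;> by_cases hb' : q'.1 = q.2
    · exact absurd (hb' ▸ ha ▸ h2) (lt_irrefl _)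
    · rw [if_pos ha, if_neg hb'] at heq
      exact hne (Prod.ext heq ha.symm)
    · rw [if_neg ha, if_pos hb'] at heq
      exact absurd (heq ▸ hb' ▸ h2) (lt_asymm h1)
    · rw [if_neg ha, if_neg hb'] at heq
      exact absurd (heq ▸ h2) (lt_irrefl _)
  · intro q hq
    have hq' : q.1 < q.2 := (Finset.mem_filter.mp hq).2
    have := dvd_of_subXX (i := q.2) (j := q.1) hq'.ne (subXX_det_eq_zero b hq')
    exact this

lemma one_add_X_pow_sub (R : Type*) [CommRing R] (m k : ℕ) :
    ∃ g : Polynomial R, (1 + Polynomial.X : Polynomial R) ^ k - (1 + Polynomial.X) ^ m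
      = Polynomial.X * g ∧ g.eval 0 = (k : R) - (m : R) := by
  have hc0 : ((1 + Polynomial.X : Polynomial R) ^ k - (1 + Polynomial.X) ^ m).coeff 0 = 0 := by
    simp [Polynomial.coeff_sub, Polynomial.coeff_one_add_X_pow]
  obtain ⟨g, hg⟩ := Polynomial.X_dvd_iff.mpr hc0
  refine ⟨g, hg, ?_⟩
  have h1 : ((1 + Polynomial.X : Polynomial R) ^ k - (1 + Polynomial.X) ^ m).coeff 1
      = (k : R) - (m : R) := by
    simp [Polynomial.coeff_sub, Polynomial.coeff_one_add_X_pow]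
  rw [hg] at h1
  rw [← Polynomial.coeff_zero_eq_eval_zero, ← h1]
  rw [show (1:ℕ) = 0 + 1 from rfl, Polynomial.coeff_X_mul]

lemma prod_factor {R : Type*} [CommRing R] {n : ℕ} (c : Fin n → ℕ) :
    ∃ G : Polynomial R,
      (∏ i : Fin n, ∏ j ∈ Finset.Ioi i, ((1 + Polynomial.X : Polynomial R) ^ (c j) - (1 + Polynomial.X) ^ (c i)))
        = Polynomial.X ^ (∑ i : Fin n, (Finset.Ioi i).card) * G
      ∧ G.eval 0 = ∏ i : Fin n, ∏ j ∈ Finset.Ioi i, ((c j : R) - (c i : R)) := by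
  classical
  choose g hg1 hg2 using fun (m k : ℕ) => one_add_X_pow_sub R m k
  refine ⟨∏ i : Fin n, ∏ j ∈ Finset.Ioi i, g (c i) (c j), ?_, ?_⟩
  · calc ∏ i : Fin n, ∏ j ∈ Finset.Ioi i, ((1 + Polynomial.X : Polynomial R) ^ (c j) - (1 + Polynomial.X) ^ (c i))
        = ∏ i : Fin n, ∏ j ∈ Finset.Ioi i, (Polynomial.X * g (c i) (c j)) := by
          exact Finset.prod_congr rfl fun i _ => Finset.prod_congr rfl fun j _ => hg1 (c i) (c j)
      _ = ∏ i : Fin n, (Polynomial.X ^ (Finset.Ioi i).card * ∏ j ∈ Finset.Ioi i, g (c i) (c j)) := by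
          refine Finset.prod_congr rfl fun i _ => ?_
          rw [Finset.prod_mul_distrib, Finset.prod_const]
      _ = _ := by
          rw [Finset.prod_mul_distrib, Finset.prod_pow_eq_pow_sum]
  · rw [← Polynomial.coeff_zero_eq_eval_zero]
    rw [Polynomial.coeff_zero_eq_eval_zero, show (Polynomial.eval 0 : Polynomial R → R) = (Polynomial.evalRingHom 0 : Polynomial R →+* R) from rfl,
      map_prod]
    refine Finset.prod_congr rfl fun i _ => ?_
    rw [map_prod]
    exact Finset.prod_congr rfl fun j _ => hg2 (c i) (c j)

lemma schur_not_dvd (p : ℕ) (hp : p.Prime) {n : ℕ} (hnp : n ≤ p) (b : Fin n → ℕ)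
    (hb : StrictMono b) (hbp : ∀ j, b j < p) (Sch : MvPolynomial (Fin n) ℤ)
    (hSch : (Matrix.of fun i j : Fin n => (MvPolynomial.X i : MvPolynomial (Fin n) ℤ) ^ b j).det
      = (∏ q ∈ pairSet n, (MvPolynomial.X q.2 - MvPolynomial.X q.1)) * Sch) :
    ¬ (p : ℤ) ∣ MvPolynomial.eval (fun _ => (1:ℤ)) Sch := by
  classical
  haveI : Fact p.Prime := ⟨hp⟩
  set Rp := Polynomial (ZMod p)
  let u : Rp := 1 + Polynomial.X
  let ψ : MvPolynomial (Fin n) ℤ →ₐ[ℤ] Rp :=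
    MvPolynomial.aeval (fun i : Fin n => u ^ (i : ℕ))
  have hψD : ψ (Matrix.of fun i j : Fin n => (MvPolynomial.X i : MvPolynomial (Fin n) ℤ) ^ b j).det
      = ∏ i : Fin n, ∏ j ∈ Finset.Ioi i, (u ^ (b j) - u ^ (b i)) := by
    rw [show ψ (Matrix.of fun i j : Fin n => (MvPolynomial.X i : MvPolynomial (Fin n) ℤ) ^ b j).det
      = ((Matrix.of fun i j : Fin n => (MvPolynomial.X i : MvPolynomial (Fin n) ℤ) ^ b j).map ψ).det
      from RingHom.map_det _ _]
    have : ((Matrix.of fun i j : Fin n => (MvPolynomial.X i : MvPolynomial (Fin n) ℤ) ^ b j).map ψ)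
        = (Matrix.vandermonde (fun j : Fin n => u ^ (b j))).transpose := by
      ext i j
      simp only [Matrix.map_apply, Matrix.of_apply, Matrix.transpose_apply, Matrix.vandermonde_apply,
        map_pow, ψ, MvPolynomial.aeval_X]
      rw [← pow_mul, ← pow_mul, mul_comm]
    rw [this, Matrix.det_transpose, Matrix.det_vandermonde]
  have hψV : ψ (∏ q ∈ pairSet n, (MvPolynomial.X q.2 - MvPolynomial.X q.1))
      = ∏ i : Fin n, ∏ j ∈ Finset.Ioi i, (u ^ (j : ℕ) - u ^ (i : ℕ)) := by
    rw [map_prod, ← prod_pairSet (fun i j => u ^ (j:ℕ) - u ^ (i:ℕ))]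
    exact Finset.prod_congr rfl fun q _ => by
      simp [ψ, MvPolynomial.aeval_X]
  obtain ⟨Gb, hGb, hGb0⟩ := prod_factor (R := ZMod p) b
  obtain ⟨Gi, hGi, hGi0⟩ := prod_factor (R := ZMod p) (fun i : Fin n => (i : ℕ))
  have heq : Gb = Gi * ψ Sch := by
    have h1 := congrArg ψ hSch
    rw [hψD, map_mul, hψV] at h1
    rw [show (∏ i : Fin n, ∏ j ∈ Finset.Ioi i, (u ^ (b j) - u ^ (b i)))
      = ∏ i : Fin n, ∏ j ∈ Finset.Ioi i, ((1 + Polynomial.X : Rp) ^ (b j) - (1 + Polynomial.X) ^ (b i)) from rfl,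
      hGb] at h1
    rw [show (∏ i : Fin n, ∏ j ∈ Finset.Ioi i, (u ^ (j:ℕ) - u ^ (i:ℕ)))
      = ∏ i : Fin n, ∏ j ∈ Finset.Ioi i, ((1 + Polynomial.X : Rp) ^ (j:ℕ) - (1 + Polynomial.X) ^ (i:ℕ)) from rfl,
      hGi] at h1
    rw [mul_assoc] at h1
    exact mul_left_cancel₀ (pow_ne_zero _ Polynomial.X_ne_zero) h1
  have hcast : ∀ m k : ℕ, m < k → k < p → ((k : ZMod p) - (m : ZMod p)) ≠ 0 := by
    intro m k hmk hkp
    rw [sub_ne_zero]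
    intro hcc
    have := (ZMod.natCast_eq_natCast_iff k m p).mp hcc
    have := Nat.ModEq.eq_of_lt_of_lt this hkp (lt_trans hmk hkp)
    omega
  have hGb0ne : Gb.eval 0 ≠ 0 := by
    rw [hGb0]
    rw [Finset.prod_ne_zero_iff]
    intro i _
    rw [Finset.prod_ne_zero_iff]
    intro j hj
    exact hcast (b i) (b j) (hb (Finset.mem_Ioi.mp hj)) (hbp j)
  have hψS0 : (ψ Sch).eval 0 ≠ 0 := by
    intro h0
    apply hGb0ne
    have := congrArg (Polynomial.eval 0) heq
    rw [Polynomial.eval_mul, h0, mul_zero] at this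
    exact this
  intro hdvd
  apply hψS0
  have hcomp : (Polynomial.evalRingHom (0 : ZMod p)).comp (ψ : MvPolynomial (Fin n) ℤ →+* Rp)
      = (Int.castRingHom (ZMod p)).comp (MvPolynomial.eval (fun _ => (1:ℤ))) := by
    apply MvPolynomial.ringHom_ext
    · intro r
      simp [ψ]
    · intro i
      simp only [RingHom.comp_apply, AlgHom.coe_toRingHom, MvPolynomial.eval_X]
      rw [show ψ (MvPolynomial.X i) = u ^ (i:ℕ) from MvPolynomial.aeval_X _ i,
        show (evalRingHom (0:ZMod p)) (u ^ (i:ℕ)) = (Polynomial.eval 0 u) ^ (i:ℕ) by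
          rw [coe_evalRingHom, Polynomial.eval_pow]]
      rw [Polynomial.eval_add, Polynomial.eval_one, Polynomial.eval_X, add_zero, one_pow]
      simp
  have : (ψ Sch).eval 0 = ((MvPolynomial.eval (fun _ => (1:ℤ)) Sch : ℤ) : ZMod p) := by
    calc (ψ Sch).eval 0
        = ((Polynomial.evalRingHom (0 : ZMod p)).comp (ψ : MvPolynomial (Fin n) ℤ →+* Rp)) Sch := rfl
      _ = ((Int.castRingHom (ZMod p)).comp (MvPolynomial.eval (fun _ => (1:ℤ)))) Sch := by rw [hcomp]
      _ = _ := rfl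
  rw [this, ZMod.intCast_zmod_eq_zero_iff_dvd]
  exact_mod_cast hdvd

lemma strictMono_fin_le {n : ℕ} {f : Fin n → ℕ} (hf : StrictMono f) (i : Fin n) : (i : ℕ) ≤ f i := by
  obtain ⟨k, hk⟩ := i
  induction k with
  | zero => exact Nat.zero_le _
  | succ m ih =>
    have hm : m < n := by omega
    have h1 := hf (show (⟨m, hm⟩ : Fin n) < ⟨m + 1, hk⟩ from by simp [Fin.lt_def])
    have h2 := ih hm
    simp only [Fin.val_mk] at *
    omega

lemma det_omega_ne_zero (p : ℕ) (hp : p.Prime) (ω : ℂ) (hω : IsPrimitiveRoot ω p)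
    {n : ℕ} (a b : Fin n → ℕ) (ha : StrictMono a) (hb : StrictMono b)
    (hap : ∀ i, a i < p) (hbp : ∀ j, b j < p) :
    (Matrix.of fun i j : Fin n => ω ^ (a i * b j)).det ≠ 0 := by
  classical
  haveI : Fact p.Prime := ⟨hp⟩
  have hnp : n ≤ p := by
    rcases Nat.eq_zero_or_pos n with h0 | h0
    · omega
    · have hi : n - 1 < n := by omega
      have h1 : n - 1 ≤ b ⟨n - 1, hi⟩ := strictMono_fin_le hb ⟨n - 1, hi⟩
      have h2 := hbp ⟨n - 1, hi⟩
      omega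
  obtain ⟨Sch, hSch⟩ := vandermonde_dvd_det (n := n) b
  have hnd := schur_not_dvd p hp hnp b hb hbp Sch hSch
  let Φ : MvPolynomial (Fin n) ℤ →ₐ[ℤ] ℂ := MvPolynomial.aeval (fun i => ω ^ a i)
  let χ : MvPolynomial (Fin n) ℤ →ₐ[ℤ] Polynomial ℤ :=
    MvPolynomial.aeval (fun i => Polynomial.X ^ a i)
  have hcomp : ((Polynomial.aeval ω : Polynomial ℤ →ₐ[ℤ] ℂ).comp χ) = Φ := by
    apply MvPolynomial.algHom_ext
    intro i
    simp [χ, Φ, MvPolynomial.aeval_X]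
  have hΦD : Φ (Matrix.of fun i j : Fin n => (MvPolynomial.X i : MvPolynomial (Fin n) ℤ) ^ b j).det
      = (Matrix.of fun i j : Fin n => ω ^ (a i * b j)).det := by
    rw [show Φ (Matrix.of fun i j : Fin n => (MvPolynomial.X i : MvPolynomial (Fin n) ℤ) ^ b j).det
      = ((Matrix.of fun i j : Fin n => (MvPolynomial.X i : MvPolynomial (Fin n) ℤ) ^ b j).map Φ).det
      from RingHom.map_det _ _]
    congr 1
    ext i j
    simp only [Matrix.map_apply, Matrix.of_apply, map_pow, Φ]
    rw [MvPolynomial.aeval_X, ← pow_mul]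
  have hΦV : Φ (∏ q ∈ pairSet n, (MvPolynomial.X q.2 - MvPolynomial.X q.1))
      = ∏ q ∈ pairSet n, (ω ^ a q.2 - ω ^ a q.1) := by
    rw [map_prod]
    refine Finset.prod_congr rfl fun q _ => ?_
    rw [map_sub, show Φ (MvPolynomial.X q.2) = ω ^ a q.2 from MvPolynomial.aeval_X _ _,
      show Φ (MvPolynomial.X q.1) = ω ^ a q.1 from MvPolynomial.aeval_X _ _]
  have hVne : (∏ q ∈ pairSet n, (ω ^ a q.2 - ω ^ a q.1)) ≠ 0 := by
    rw [Finset.prod_ne_zero_iff]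
    intro q hq
    have hlt : q.1 < q.2 := (Finset.mem_filter.mp hq).2
    rw [sub_ne_zero]
    intro hcc
    exact absurd (hω.pow_inj (hap q.2) (hap q.1) hcc) (ha hlt).ne'
  intro hdet
  have h1 := congrArg Φ hSch
  rw [hΦD, map_mul, hΦV, hdet] at h1
  have hS0 : Polynomial.aeval ω (χ Sch) = 0 := by
    have : Φ Sch = 0 := by
      rcases mul_eq_zero.mp h1.symm with h | h
      · exact absurd h hVne
      · exact h
    calc Polynomial.aeval ω (χ Sch) = ((Polynomial.aeval ω : Polynomial ℤ →ₐ[ℤ] ℂ).comp χ) Sch := rfl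
      _ = Φ Sch := by rw [hcomp]
      _ = 0 := this
  have hmin : minpoly ℤ ω ∣ χ Sch :=
    minpoly.isIntegrallyClosed_dvd (hω.isIntegral hp.pos) hS0
  rw [← Polynomial.cyclotomic_eq_minpoly hω hp.pos] at hmin
  obtain ⟨G, hG⟩ := hmin
  apply hnd
  have hev : (χ Sch).eval 1 = MvPolynomial.eval (fun _ => (1:ℤ)) Sch := by
    have hc : (Polynomial.evalRingHom (1:ℤ)).comp (χ : MvPolynomial (Fin n) ℤ →+* Polynomial ℤ)
        = (MvPolynomial.eval (fun _ => (1:ℤ))) := by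
      apply MvPolynomial.ringHom_ext
      · intro r; simp [χ]
      · intro i
        simp only [RingHom.comp_apply, AlgHom.coe_toRingHom, MvPolynomial.eval_X]
        rw [show χ (MvPolynomial.X i) = Polynomial.X ^ a i from MvPolynomial.aeval_X _ _]
        simp
    calc (χ Sch).eval 1
        = ((Polynomial.evalRingHom (1:ℤ)).comp (χ : MvPolynomial (Fin n) ℤ →+* Polynomial ℤ)) Sch := rfl
      _ = _ := by rw [hc]
  rw [← hev, hG, Polynomial.eval_mul, Polynomial.eval_one_cyclotomic_prime]
  exact Dvd.intro _ rfl

theorem dft_matrix_invertible (p : ℕ) (hp : p.Prime) (ω : ℂ) (hω : IsPrimitiveRoot ω p) :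
    IsUnit (Matrix.of fun i j : Fin p => ω ^ ((i : ℕ) * (j : ℕ))) ∧
    ∀ (I J : Finset ℕ), I ⊆ Finset.range p → J ⊆ Finset.range p →
      ∀ h : I.card = J.card,
        IsUnit (Matrix.of fun a b : Fin I.card =>
          ω ^ ((I.orderIsoOfFin rfl a : ℕ) * (J.orderIsoOfFin h.symm b : ℕ))) := by
  constructor
  · apply (Matrix.isUnit_iff_isUnit_det _).mpr
    apply isUnit_iff_ne_zero.mpr
    exact det_omega_ne_zero p hp ω hω (fun i : Fin p => (i : ℕ)) (fun j : Fin p => (j : ℕ))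
      (fun _ _ h => h) (fun _ _ h => h) (fun i => i.isLt) (fun j => j.isLt)
  · intro I J hI hJ h
    apply (Matrix.isUnit_iff_isUnit_det _).mpr
    apply isUnit_iff_ne_zero.mpr
    refine det_omega_ne_zero p hp ω hω
      (fun k => ((I.orderIsoOfFin rfl k : ℕ))) (fun k => ((J.orderIsoOfFin h.symm k : ℕ)))
      ?_ ?_ ?_ ?_
    · intro i j hij
      exact_mod_cast (I.orderIsoOfFin rfl).strictMono hij
    · intro i j hij
      exact_mod_cast (J.orderIsoOfFin h.symm).strictMono hij
    · intro i
      exact Finset.mem_range.mp (hI (I.orderIsoOfFin rfl i).2)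
    · intro j
      exact Finset.mem_range.mp (hJ (J.orderIsoOfFin h.symm j).2)
end

section
/- Let p be a prime and f : ℤ/pℤ → ℂ with Fourier transform f̂. If |supp f| + |supp f̂| ≤ p then f is identically zero. (Equivalent restatement of the uncertainty principle.) -/
open Finset

lemma sum_range_card_le (s : Finset ℕ) :
    ((∑ x ∈ Finset.range s.card, x) ≤ ∑ x ∈ s, x) ∧
      ((∑ x ∈ s, x) ≤ ∑ x ∈ Finset.range s.card, x → s = Finset.range s.card) := by
  induction s using Finset.induction_on_max with
  | empty => simp
  | insert a s ha ih =>
    have has : a ∉ s := fun h => lt_irrefl a (ha a h)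
    have hsub : s ⊆ Finset.range a := fun x hx => Finset.mem_range.mpr (ha x hx)
    have hcard : s.card ≤ a := by
      simpa using Finset.card_le_card hsub
    rw [Finset.card_insert_of_notMem has, Finset.sum_insert has, Finset.sum_range_succ]
    constructor
    · omega
    · intro h
      have h1 : a = s.card ∧ (∑ x ∈ s, x) = ∑ x ∈ Finset.range s.card, x := by
        have := ih.1; omega
      rw [ih.2 h1.2.le, ← h1.1, ← Finset.range_add_one]
      simp

lemma exists_perm_of_inj {n : ℕ} (c : Fin n → ℕ) (hc : Function.Injective c)
    (hsum : ∑ i, c i = ∑ i : Fin n, (i : ℕ)) :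
    ∃ τ : Equiv.Perm (Fin n), ∀ i, c i = (τ i : ℕ) := by
  set s : Finset ℕ := Finset.univ.image c with hs
  have hcard : s.card = n := by
    rw [hs, Finset.card_image_of_injective _ hc, Finset.card_univ, Fintype.card_fin]
  have hsum2 : (∑ x ∈ s, x) = ∑ x ∈ Finset.range s.card, x := by
    rw [hs, Finset.sum_image (fun a _ b _ h => hc h), hcard, hsum,
      Fin.sum_univ_eq_sum_range (fun i => i)]
  have hrange : s = Finset.range n := by
    rw [← hcard]; exact (sum_range_card_le s).2 hsum2.le
  have hlt : ∀ i, c i < n := by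
    intro i
    have : c i ∈ s := Finset.mem_image_of_mem c (Finset.mem_univ i)
    rw [hrange] at this
    exact Finset.mem_range.mp this
  let g : Fin n → Fin n := fun i => ⟨c i, hlt i⟩
  have hg : Function.Injective g := fun i j h => hc (congrArg Fin.val h)
  exact ⟨Equiv.ofBijective g (Finite.injective_iff_bijective.mp hg),
    fun i => rfl⟩

open Finset

namespace TaoUncertainty

variable {n : ℕ}

def ee (α β : Fin n → ℕ) (σ : Equiv.Perm (Fin n)) : ℕ := ∑ i, α (σ i) * β i

lemma det_eq_sum {R : Type*} [CommRing R] (M : Matrix (Fin n) (Fin n) R) :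
    M.det = ∑ σ : Equiv.Perm (Fin n), ((Equiv.Perm.sign σ : ℤ) : R) * ∏ i, M (σ i) i := by
  rw [Matrix.det_apply]
  refine Finset.sum_congr rfl fun σ _ => ?_
  rw [Units.smul_def, zsmul_eq_mul]

lemma Lpow_eq (α β : Fin n → ℕ) (t : ℕ) :
    (∑ σ : Equiv.Perm (Fin n), (Equiv.Perm.sign σ : ℤ) * (ee α β σ : ℤ) ^ t)
      = ∑ c ∈ Finset.piAntidiag Finset.univ t,
          (Nat.multinomial Finset.univ c : ℤ) * (∏ i, (β i : ℤ) ^ c i) *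
            Matrix.det (Matrix.of fun i j : Fin n => (α i : ℤ) ^ c j) := by
  have h1 : ∀ σ : Equiv.Perm (Fin n), (ee α β σ : ℤ) ^ t
      = ∑ c ∈ Finset.piAntidiag Finset.univ t,
          (Nat.multinomial Finset.univ c : ℤ) *
            ((∏ i, (β i : ℤ) ^ c i) * ∏ i, (α (σ i) : ℤ) ^ c i) := by
    intro σ
    have he : (ee α β σ : ℤ) = ∑ i, (α (σ i) : ℤ) * (β i : ℤ) := by
      unfold ee; push_cast; ring
    rw [he, Finset.sum_pow_eq_sum_piAntidiag]
    refine Finset.sum_congr rfl fun c _ => ?_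
    rw [← Finset.prod_mul_distrib]
    congr 1
    refine Finset.prod_congr rfl fun i _ => ?_
    rw [mul_pow, mul_comm]
  calc (∑ σ : Equiv.Perm (Fin n), (Equiv.Perm.sign σ : ℤ) * (ee α β σ : ℤ) ^ t)
      = ∑ σ : Equiv.Perm (Fin n), ∑ c ∈ Finset.piAntidiag Finset.univ t,
          (Equiv.Perm.sign σ : ℤ) * ((Nat.multinomial Finset.univ c : ℤ) *
            ((∏ i, (β i : ℤ) ^ c i) * ∏ i, (α (σ i) : ℤ) ^ c i)) := by
        refine Finset.sum_congr rfl fun σ _ => ?_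
        rw [h1, Finset.mul_sum]
    _ = ∑ c ∈ Finset.piAntidiag Finset.univ t, ∑ σ : Equiv.Perm (Fin n),
          (Equiv.Perm.sign σ : ℤ) * ((Nat.multinomial Finset.univ c : ℤ) *
            ((∏ i, (β i : ℤ) ^ c i) * ∏ i, (α (σ i) : ℤ) ^ c i)) := Finset.sum_comm
    _ = _ := by
        refine Finset.sum_congr rfl fun c _ => ?_
        rw [det_eq_sum, Finset.mul_sum]
        refine Finset.sum_congr rfl fun σ _ => ?_
        simp only [Matrix.of_apply]
        push_cast
        ring

lemma det_zero_of_not_inj (x : Fin n → ℤ) (c : Fin n → ℕ) (hc : ¬ Function.Injective c) :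
    Matrix.det (Matrix.of fun i j : Fin n => x i ^ c j) = 0 := by
  simp only [Function.Injective, not_forall] at hc
  obtain ⟨j, j', hjj, hne⟩ := hc
  exact Matrix.det_zero_of_column_eq hne (fun k => by simp [hjj])

lemma det_perm_pow (x : Fin n → ℤ) (τ : Equiv.Perm (Fin n)) :
    Matrix.det (Matrix.of fun i j : Fin n => x i ^ ((τ j : Fin n) : ℕ))
      = (Equiv.Perm.sign τ : ℤ) * ∏ i : Fin n, ∏ j ∈ Finset.Ioi i, (x j - x i) := by
  have : (Matrix.of fun i j : Fin n => x i ^ ((τ j : Fin n) : ℕ))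
      = (Matrix.vandermonde x).submatrix id τ := by
    ext i j; simp [Matrix.vandermonde]
  rw [this, Matrix.det_permute', Matrix.det_vandermonde]
  norm_cast



lemma multinomial_perm (τ : Equiv.Perm (Fin n)) :
    Nat.multinomial Finset.univ (fun i => ((τ i : Fin n) : ℕ))
      = Nat.multinomial Finset.univ (fun i : Fin n => (i : ℕ)) := by
  have h1 := Nat.multinomial_spec Finset.univ (fun i => ((τ i : Fin n) : ℕ))
  have h2 := Nat.multinomial_spec Finset.univ (fun i : Fin n => (i : ℕ))
  have hp : (∏ i, Nat.factorial ((τ i : Fin n) : ℕ)) = ∏ i : Fin n, Nat.factorial (i : ℕ) :=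
    Equiv.prod_comp τ (fun i => Nat.factorial (i : ℕ))
  have hs : (∑ i, ((τ i : Fin n) : ℕ)) = ∑ i : Fin n, (i : ℕ) :=
    Equiv.sum_comp τ (fun i => (i : ℕ))
  have hpos : 0 < ∏ i : Fin n, Nat.factorial (i : ℕ) :=
    Finset.prod_pos fun i _ => Nat.factorial_pos _
  apply Nat.eq_of_mul_eq_mul_left hpos
  calc (∏ i : Fin n, Nat.factorial (i : ℕ)) * Nat.multinomial Finset.univ (fun i => ((τ i : Fin n) : ℕ))
      = (∏ i, Nat.factorial ((τ i : Fin n) : ℕ)) * Nat.multinomial Finset.univ (fun i => ((τ i : Fin n) : ℕ)) := by rw [hp]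
    _ = (∑ i, ((τ i : Fin n) : ℕ)).factorial := by
        simpa using h1
    _ = (∑ i : Fin n, (i : ℕ)).factorial := by rw [hs]
    _ = _ := by simpa using h2.symm

lemma sum_sign_pow_perm (x : Fin n → ℤ) :
    (∑ τ : Equiv.Perm (Fin n), (Equiv.Perm.sign τ : ℤ) * ∏ i, x i ^ ((τ i : Fin n) : ℕ))
      = ∏ i : Fin n, ∏ j ∈ Finset.Ioi i, (x j - x i) := by
  have h := det_eq_sum (Matrix.of fun i j : Fin n => x j ^ (i : ℕ))
  have h2 : (Matrix.of fun i j : Fin n => x j ^ (i : ℕ)).det = ∏ i : Fin n, ∏ j ∈ Finset.Ioi i, (x j - x i) := by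
    rw [← Matrix.det_transpose]
    have : (Matrix.of fun i j : Fin n => x j ^ (i : ℕ)).transpose = Matrix.vandermonde x := by
      ext i j; simp [Matrix.vandermonde, Matrix.transpose_apply]
    rw [this, Matrix.det_vandermonde]
  rw [← h2, h]
  refine Finset.sum_congr rfl fun τ _ => ?_
  simp

lemma Lpow_top (α β : Fin n → ℕ) :
    (∑ σ : Equiv.Perm (Fin n), (Equiv.Perm.sign σ : ℤ) *
        (ee α β σ : ℤ) ^ (∑ i : Fin n, (i : ℕ)))
      = (Nat.multinomial Finset.univ (fun i : Fin n => (i : ℕ)) : ℤ) *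
        ((∏ i : Fin n, ∏ j ∈ Finset.Ioi i, ((α j : ℤ) - (α i : ℤ))) *
          (∏ i : Fin n, ∏ j ∈ Finset.Ioi i, ((β j : ℤ) - (β i : ℤ)))) := by
  rw [Lpow_eq]
  set m := ∑ i : Fin n, (i : ℕ) with hm
  set F : (Fin n → ℕ) → ℤ := fun c =>
    (Nat.multinomial Finset.univ c : ℤ) * (∏ i, (β i : ℤ) ^ c i) *
      Matrix.det (Matrix.of fun i j : Fin n => (α i : ℤ) ^ c j) with hF
  have hfilter : (∑ c ∈ Finset.piAntidiag Finset.univ m, F c)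
      = ∑ c ∈ (Finset.piAntidiag Finset.univ m).filter (fun c => Function.Injective c), F c := by
    rw [Finset.sum_filter_of_ne]
    intro c _ hne
    by_contra hinj
    exact hne (by rw [hF]; simp [det_zero_of_not_inj _ _ hinj])
  rw [hfilter]
  rw [← Finset.sum_bij (i := fun (τ : Equiv.Perm (Fin n)) _ => fun i => ((τ i : Fin n) : ℕ))
    (t := (Finset.piAntidiag Finset.univ m).filter (fun c => Function.Injective c))
    (g := F) (s := Finset.univ)
    (f := fun τ => (Equiv.Perm.sign τ : ℤ) *
      ((Nat.multinomial Finset.univ (fun i : Fin n => (i : ℕ)) : ℤ) *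
        ((∏ i, (β i : ℤ) ^ ((τ i : Fin n) : ℕ)) *
          (∏ i : Fin n, ∏ j ∈ Finset.Ioi i, ((α j : ℤ) - (α i : ℤ))))))
    ?_ ?_ ?_ ?_]
  · -- final sum computation
    have : ∀ τ : Equiv.Perm (Fin n), (Equiv.Perm.sign τ : ℤ) *
      ((Nat.multinomial Finset.univ (fun i : Fin n => (i : ℕ)) : ℤ) *
        ((∏ i, (β i : ℤ) ^ ((τ i : Fin n) : ℕ)) *
          (∏ i : Fin n, ∏ j ∈ Finset.Ioi i, ((α j : ℤ) - (α i : ℤ)))))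
      = ((Nat.multinomial Finset.univ (fun i : Fin n => (i : ℕ)) : ℤ) *
          (∏ i : Fin n, ∏ j ∈ Finset.Ioi i, ((α j : ℤ) - (α i : ℤ)))) *
        ((Equiv.Perm.sign τ : ℤ) * ∏ i, (β i : ℤ) ^ ((τ i : Fin n) : ℕ)) := by
      intro τ; ring
    rw [Finset.sum_congr rfl (fun τ _ => this τ), ← Finset.mul_sum, sum_sign_pow_perm]
    ring
  · intro τ _
    rw [Finset.mem_filter]
    constructor
    · rw [Finset.mem_piAntidiag]
      exact ⟨Equiv.sum_comp τ (fun i => (i : ℕ)), fun i _ => Finset.mem_univ i⟩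
    · exact Fin.val_injective.comp τ.injective
  · intro τ₁ _ τ₂ _ h
    exact Equiv.ext fun i => Fin.val_injective (by simpa using congrFun h i)
  · intro c hc
    rw [Finset.mem_filter, Finset.mem_piAntidiag] at hc
    obtain ⟨τ, hτ⟩ := exists_perm_of_inj c hc.2 hc.1.1
    exact ⟨τ, Finset.mem_univ τ, funext fun i => (hτ i).symm⟩
  · intro τ _
    have hdet := det_perm_pow (fun i => (α i : ℤ)) τ
    simp only [hF]
    rw [multinomial_perm τ, hdet]
    ring

lemma Lpow_zero (α β : Fin n → ℕ) (t : ℕ) (ht : t < ∑ i : Fin n, (i : ℕ)) :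
    (∑ σ : Equiv.Perm (Fin n), (Equiv.Perm.sign σ : ℤ) * (ee α β σ : ℤ) ^ t) = 0 := by
  rw [Lpow_eq]
  refine Finset.sum_eq_zero fun c hc => ?_
  rw [Finset.mem_piAntidiag] at hc
  have hni : ¬ Function.Injective c := by
    intro hinj
    have himg : (Finset.univ.image c).card = n := by
      rw [Finset.card_image_of_injective _ hinj, Finset.card_univ, Fintype.card_fin]
    have h1 : (∑ x ∈ Finset.range (Finset.univ.image c).card, x) ≤ ∑ x ∈ Finset.univ.image c, x :=
      (sum_range_card_le _).1
    rw [himg, Finset.sum_image (fun a _ b _ h => hinj h), hc.1] at h1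
    rw [← Fin.sum_univ_eq_sum_range (fun i => i) n] at h1
    omega
  rw [det_zero_of_not_inj _ _ hni, mul_zero]

lemma LP_expand (α β : Fin n → ℕ) (Q : Polynomial ℤ) :
    (∑ σ : Equiv.Perm (Fin n), (Equiv.Perm.sign σ : ℤ) * Q.eval (ee α β σ : ℤ))
      = ∑ t ∈ Finset.range (Q.natDegree + 1), Q.coeff t *
          (∑ σ : Equiv.Perm (Fin n), (Equiv.Perm.sign σ : ℤ) * (ee α β σ : ℤ) ^ t) := by
  have : ∀ σ : Equiv.Perm (Fin n),
      (Equiv.Perm.sign σ : ℤ) * Q.eval (ee α β σ : ℤ)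
        = ∑ t ∈ Finset.range (Q.natDegree + 1),
            Q.coeff t * ((Equiv.Perm.sign σ : ℤ) * (ee α β σ : ℤ) ^ t) := by
    intro σ
    rw [Polynomial.eval_eq_sum_range, Finset.mul_sum]
    refine Finset.sum_congr rfl fun t _ => by ring
  rw [Finset.sum_congr rfl (fun σ _ => this σ), Finset.sum_comm]
  exact Finset.sum_congr rfl fun t _ => by rw [Finset.mul_sum]

lemma Sk_zero (α β : Fin n → ℕ) (k : ℕ) (hk : k < ∑ i : Fin n, (i : ℕ)) :
    (∑ σ : Equiv.Perm (Fin n), (Equiv.Perm.sign σ : ℤ) * ((ee α β σ).choose k : ℤ)) = 0 := by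
  have hfac : (Nat.factorial k : ℤ) ≠ 0 := Int.natCast_ne_zero.mpr (Nat.factorial_ne_zero k)
  apply mul_left_cancel₀ hfac
  rw [mul_zero, Finset.mul_sum]
  have h1 : ∀ σ : Equiv.Perm (Fin n),
      (Nat.factorial k : ℤ) * ((Equiv.Perm.sign σ : ℤ) * ((ee α β σ).choose k : ℤ))
        = (Equiv.Perm.sign σ : ℤ) * (descPochhammer ℤ k).eval (ee α β σ : ℤ) := by
    intro σ
    rw [descPochhammer_eval_eq_descFactorial, Nat.descFactorial_eq_factorial_mul_choose]
    push_cast; ring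
  rw [Finset.sum_congr rfl (fun σ _ => h1 σ), LP_expand]
  refine Finset.sum_eq_zero fun t ht => ?_
  rw [Lpow_zero α β t ?_, mul_zero]
  rw [Finset.mem_range, descPochhammer_natDegree] at ht
  omega

lemma Sm_eq (α β : Fin n → ℕ) :
    (∏ i : Fin n, (Nat.factorial (i : ℕ) : ℤ)) *
        (∑ σ : Equiv.Perm (Fin n), (Equiv.Perm.sign σ : ℤ) *
          ((ee α β σ).choose (∑ i : Fin n, (i : ℕ)) : ℤ))
      = (∏ i : Fin n, ∏ j ∈ Finset.Ioi i, ((α j : ℤ) - (α i : ℤ))) *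
          (∏ i : Fin n, ∏ j ∈ Finset.Ioi i, ((β j : ℤ) - (β i : ℤ))) := by
  set m := ∑ i : Fin n, (i : ℕ) with hm
  set K := Nat.multinomial Finset.univ (fun i : Fin n => (i : ℕ)) with hK
  have hKpos : (0 : ℤ) < (K : ℤ) := Int.natCast_pos.mpr (Nat.multinomial_pos _ _)
  apply mul_left_cancel₀ (ne_of_gt hKpos)
  have hspec : (∏ i : Fin n, Nat.factorial (i : ℕ)) * K = Nat.factorial m := by
    simpa using Nat.multinomial_spec Finset.univ (fun i : Fin n => (i : ℕ))
  have step1 : (Nat.factorial m : ℤ) *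
      (∑ σ : Equiv.Perm (Fin n), (Equiv.Perm.sign σ : ℤ) * ((ee α β σ).choose m : ℤ))
      = (∑ σ : Equiv.Perm (Fin n), (Equiv.Perm.sign σ : ℤ) * (ee α β σ : ℤ) ^ m) := by
    rw [Finset.mul_sum]
    have h1 : ∀ σ : Equiv.Perm (Fin n),
        (Nat.factorial m : ℤ) * ((Equiv.Perm.sign σ : ℤ) * ((ee α β σ).choose m : ℤ))
          = (Equiv.Perm.sign σ : ℤ) * (descPochhammer ℤ m).eval (ee α β σ : ℤ) := by
      intro σ
      rw [descPochhammer_eval_eq_descFactorial, Nat.descFactorial_eq_factorial_mul_choose]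
      push_cast; ring
    rw [Finset.sum_congr rfl (fun σ _ => h1 σ), LP_expand, descPochhammer_natDegree,
      Finset.sum_range_succ]
    have hmono : (descPochhammer ℤ m).coeff m = 1 := by
      have := monic_descPochhammer ℤ m
      have hdeg := descPochhammer_natDegree (R := ℤ) m
      simpa [hdeg] using this.coeff_natDegree
    rw [hmono, one_mul]
    have hz : (∑ t ∈ Finset.range m, (descPochhammer ℤ m).coeff t *
        (∑ σ : Equiv.Perm (Fin n), (Equiv.Perm.sign σ : ℤ) * (ee α β σ : ℤ) ^ t)) = 0 := by
      refine Finset.sum_eq_zero fun t ht => ?_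
      rw [Lpow_zero α β t (Finset.mem_range.mp ht), mul_zero]
    rw [hz, zero_add]
  calc (K : ℤ) * ((∏ i : Fin n, (Nat.factorial (i : ℕ) : ℤ)) *
        (∑ σ : Equiv.Perm (Fin n), (Equiv.Perm.sign σ : ℤ) * ((ee α β σ).choose m : ℤ)))
      = (Nat.factorial m : ℤ) *
        (∑ σ : Equiv.Perm (Fin n), (Equiv.Perm.sign σ : ℤ) * ((ee α β σ).choose m : ℤ)) := by
        rw [← hspec]; push_cast; ring
    _ = (∑ σ : Equiv.Perm (Fin n), (Equiv.Perm.sign σ : ℤ) * (ee α β σ : ℤ) ^ m) := step1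
    _ = (K : ℤ) * (((∏ i : Fin n, ∏ j ∈ Finset.Ioi i, ((α j : ℤ) - (α i : ℤ))) *
          (∏ i : Fin n, ∏ j ∈ Finset.Ioi i, ((β j : ℤ) - (β i : ℤ))))) := Lpow_top α β

lemma not_dvd_vandermonde (p : ℕ) (hp : p.Prime) (x : Fin n → ℕ)
    (hlt : ∀ i, x i < p) (hinj : Function.Injective x) :
    ¬ ((p : ℤ) ∣ ∏ i : Fin n, ∏ j ∈ Finset.Ioi i, ((x j : ℤ) - (x i : ℤ))) := by
  intro hdvd
  have hP : Prime (p : ℤ) := Nat.prime_iff_prime_int.mp hp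
  obtain ⟨i, _, hi⟩ := (Prime.dvd_finset_prod_iff hP _).mp hdvd
  obtain ⟨j, hj, hd⟩ := (Prime.dvd_finset_prod_iff hP _).mp hi
  have hne : j ≠ i := ne_of_gt (Finset.mem_Ioi.mp hj)
  have hd0 : (x j : ℤ) - (x i : ℤ) ≠ 0 := by
    intro h0
    exact hne (hinj (by exact_mod_cast sub_eq_zero.mp h0))
  have hle := Int.le_of_dvd (abs_pos.mpr hd0) (dvd_abs _ _ |>.mpr hd)
  have h1 : (x j : ℤ) < p := by exact_mod_cast hlt j
  have h2 : (x i : ℤ) < p := by exact_mod_cast hlt i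
  have h3 : (0 : ℤ) ≤ x j := Int.natCast_nonneg _
  have h4 : (0 : ℤ) ≤ x i := Int.natCast_nonneg _
  have habs : |(x j : ℤ) - (x i : ℤ)| < p := abs_sub_lt_iff.mpr ⟨by omega, by omega⟩
  omega

lemma p_not_dvd_Sm (p : ℕ) (hp : p.Prime) (α β : Fin n → ℕ)
    (hα : ∀ i, α i < p) (hβ : ∀ i, β i < p)
    (hαi : Function.Injective α) (hβi : Function.Injective β) :
    ¬ ((p : ℤ) ∣ ∑ σ : Equiv.Perm (Fin n), (Equiv.Perm.sign σ : ℤ) *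
        ((ee α β σ).choose (∑ i : Fin n, (i : ℕ)) : ℤ)) := by
  intro h
  have hP : Prime (p : ℤ) := Nat.prime_iff_prime_int.mp hp
  have h2 : (p : ℤ) ∣ (∏ i : Fin n, ∏ j ∈ Finset.Ioi i, ((α j : ℤ) - (α i : ℤ))) *
      (∏ i : Fin n, ∏ j ∈ Finset.Ioi i, ((β j : ℤ) - (β i : ℤ))) := by
    rw [← Sm_eq α β]
    exact Dvd.dvd.mul_left h _
  rcases hP.dvd_mul.mp h2 with h3 | h3
  · exact not_dvd_vandermonde p hp α hα hαi h3
  · exact not_dvd_vandermonde p hp β hβ hβi h3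
open Polynomial in
lemma int_dvd_of_sub_one_dvd (p : ℕ) (hp : p.Prime) (ζ : ℂ)
    (hζ : IsPrimitiveRoot ζ p) (S : ℤ) (w0 : ℂ) (hw0 : IsIntegral ℤ w0)
    (hz : (S : ℂ) = (1 - ζ) * w0) : (p : ℤ) ∣ S := by
  haveI : Fact p.Prime := ⟨hp⟩
  have hζint : IsIntegral ℤ ζ := hζ.isIntegral hp.pos
  set R := integralClosure ℤ ℂ with hR
  set z : R := ⟨ζ, hζint⟩ with hzdef
  have hSdvd : (1 - z) ∣ (S : R) := by
    refine ⟨⟨w0, hw0⟩, ?_⟩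
    apply Subtype.ext
    push_cast
    exact hz
  -- each 1 - z^j divides 1 - z
  have hjd : ∀ j ∈ Finset.Ico 1 p, (1 - z ^ j) ∣ (S : R) := by
    intro j hj
    rw [Finset.mem_Ico] at hj
    have hj0 : (j : ZMod p) ≠ 0 := by
      rw [Ne, ZMod.natCast_eq_zero_iff]
      exact fun hd => absurd (Nat.le_of_dvd (by omega) hd) (by omega)
    set j' := ((j : ZMod p)⁻¹).val with hj'
    have hmod : j * j' ≡ 1 [MOD p] := by
      have : ((j * j' : ℕ) : ZMod p) = ((1 : ℕ) : ZMod p) := by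
        push_cast
        rw [hj', ZMod.natCast_val, ZMod.cast_id]
        exact mul_inv_cancel₀ hj0
      exact (ZMod.natCast_eq_natCast_iff _ _ _).mp this
    have hzpow : z ^ (j * j') = z := by
      apply Subtype.ext
      push_cast
      have hdecomp : j * j' = p * (j * j' / p) + 1 := by
        have hdm := Nat.div_add_mod (j * j') p
        have hmm : (j * j') % p = 1 % p := hmod
        have h1p : 1 % p = 1 := Nat.mod_eq_of_lt hp.one_lt
        omega
      rw [hdecomp, pow_add, pow_mul, hζ.pow_eq_one, one_pow, one_mul, pow_one]
    have hd1 : (1 - z ^ j) ∣ (1 - z) := by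
      have := sub_dvd_pow_sub_pow (1 : R) (z ^ j) j'
      rw [one_pow, ← pow_mul] at this
      rwa [hzpow] at this
    exact hd1.trans hSdvd
  -- product formula
  have hprodC : (∏ j ∈ Finset.Ico 1 p, (1 - ζ ^ j)) = (p : ℂ) := by
    have h1 : (X ^ p - C (1 : ℂ)) = ∏ i ∈ Finset.range p, (X - C (ζ ^ i * 1)) :=
      X_pow_sub_C_eq_prod hζ hp.pos (one_pow p)
    simp only [mul_one] at h1
    rw [Finset.range_eq_Ico, Finset.prod_eq_prod_Ico_succ_bot hp.pos] at h1
    have hgeom : (∑ i ∈ Finset.range p, (X : ℂ[X]) ^ i) * (X - 1) = X ^ p - 1 :=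
      geom_sum_mul X p
    have hC1 : (C (1 : ℂ)) = 1 := map_one C
    rw [hC1] at h1
    simp only [pow_zero, hC1] at h1
    have hcancel : (∏ i ∈ Finset.Ico 1 p, ((X : ℂ[X]) - C (ζ ^ i)))
        = ∑ i ∈ Finset.range p, (X : ℂ[X]) ^ i := by
      have hX1 : ((X : ℂ[X]) - 1) ≠ 0 := by
        intro hc
        have h2 := congrArg (Polynomial.eval 2) hc
        norm_num at h2
      apply mul_left_cancel₀ hX1
      calc ((X : ℂ[X]) - 1) * ∏ i ∈ Finset.Ico 1 p, ((X : ℂ[X]) - C (ζ ^ i))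
          = X ^ p - 1 := h1.symm
        _ = (∑ i ∈ Finset.range p, (X : ℂ[X]) ^ i) * (X - 1) := hgeom.symm
        _ = ((X : ℂ[X]) - 1) * ∑ i ∈ Finset.range p, (X : ℂ[X]) ^ i := mul_comm _ _
    have heval := congrArg (Polynomial.eval 1) hcancel
    rw [Polynomial.eval_prod, Polynomial.eval_finset_sum] at heval
    simp only [Polynomial.eval_sub, Polynomial.eval_one, Polynomial.eval_X, Polynomial.eval_C,
      Polynomial.eval_pow] at heval
    rw [heval]
    simp
  have hprodR : (∏ j ∈ Finset.Ico 1 p, (1 - z ^ j)) = ((p : ℤ) : R) := by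
    apply Subtype.ext
    push_cast
    exact hprodC
  have hpow : ((p : ℤ) : R) ∣ (S : R) ^ (p - 1) := by
    have hd : (∏ j ∈ Finset.Ico 1 p, (1 - z ^ j)) ∣ ∏ _j ∈ Finset.Ico 1 p, (S : R) :=
      Finset.prod_dvd_prod_of_dvd _ _ (fun j hj => hjd j hj)
    rw [Finset.prod_const, Nat.card_Ico, hprodR] at hd
    exact hd
  obtain ⟨t, ht⟩ := hpow
  have htC : ((S : ℂ)) ^ (p - 1) = (p : ℂ) * (t : ℂ) := by
    have h2 := congrArg (fun x : R => (x : ℂ)) ht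
    push_cast at h2
    exact h2
  have hp0 : (p : ℚ) ≠ 0 := Nat.cast_ne_zero.mpr hp.ne_zero
  have hp0C : (p : ℂ) ≠ 0 := Nat.cast_ne_zero.mpr hp.ne_zero
  set q : ℚ := (S : ℚ) ^ (p - 1) / p with hq
  have htq : (t : ℂ) = algebraMap ℚ ℂ q := by
    have h3 : (t : ℂ) = (S : ℂ) ^ (p - 1) / (p : ℂ) := by
      rw [eq_div_iff hp0C, htC]
      ring
    rw [h3, hq, eq_ratCast (algebraMap ℚ ℂ)]
    push_cast
    ring
  have hint : IsIntegral ℤ q := by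
    rw [← isIntegral_algebraMap_iff (algebraMap ℚ ℂ).injective, ← htq]
    exact t.2
  obtain ⟨y, hy⟩ := IsIntegrallyClosed.isIntegral_iff.mp hint
  have hZQ : (S : ℚ) ^ (p - 1) = (p : ℚ) * (y : ℚ) := by
    have hyq : (y : ℚ) = q := hy
    rw [hyq, hq]
    field_simp
  have hZ : S ^ (p - 1) = p * y := by exact_mod_cast hZQ
  exact (Nat.prime_iff_prime_int.mp hp).dvd_of_dvd_pow ⟨y, hZ⟩

lemma cheb (p : ℕ) (hp : p.Prime) (α β : Fin n → ℕ)
    (hα : ∀ i, α i < p) (hβ : ∀ i, β i < p)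
    (hαi : Function.Injective α) (hβi : Function.Injective β) :
    (∑ σ : Equiv.Perm (Fin n), ((Equiv.Perm.sign σ : ℤ) : ℂ) *
      Complex.exp (2 * Real.pi * Complex.I / p) ^ (ee α β σ)) ≠ 0 := by
  intro hD
  set ζ := Complex.exp (2 * Real.pi * Complex.I / p) with hζdef
  have hζ : IsPrimitiveRoot ζ p := Complex.isPrimitiveRoot_exp p hp.ne_zero
  set m := ∑ i : Fin n, (i : ℕ) with hm
  set Sm : ℤ := ∑ σ : Equiv.Perm (Fin n), (Equiv.Perm.sign σ : ℤ) *
    ((ee α β σ).choose m : ℤ) with hSm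
  set P : Polynomial ℤ := ∑ σ : Equiv.Perm (Fin n),
    Polynomial.C ((Equiv.Perm.sign σ : ℤ)) * (1 + Polynomial.X) ^ (ee α β σ) with hP
  have hcoeff : ∀ k, P.coeff k = ∑ σ : Equiv.Perm (Fin n),
      (Equiv.Perm.sign σ : ℤ) * ((ee α β σ).choose k : ℤ) := by
    intro k
    rw [hP, Polynomial.finset_sum_coeff]
    refine Finset.sum_congr rfl fun σ _ => ?_
    rw [Polynomial.coeff_C_mul, Polynomial.coeff_one_add_X_pow]
  have hlow : ∀ k < m, P.coeff k = 0 := fun k hk => by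
    rw [hcoeff]; exact Sk_zero α β k hk
  obtain ⟨Q, hPQ⟩ := Polynomial.X_pow_dvd_iff.mpr hlow
  have hQ0 : Q.coeff 0 = Sm := by
    have h1 := Polynomial.coeff_X_pow_mul Q m 0
    rw [← hPQ, zero_add, hcoeff] at h1
    rw [← h1, hSm]
  have hζint : IsIntegral ℤ ζ := hζ.isIntegral hp.pos
  have huint : IsIntegral ℤ (ζ - 1) := hζint.sub isIntegral_one
  set u : integralClosure ℤ ℂ := ⟨ζ - 1, huint⟩ with hu
  have hev : (Polynomial.aeval (ζ - 1) P : ℂ) = 0 := by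
    rw [hP, map_sum, ← hD]
    refine Finset.sum_congr rfl fun σ _ => ?_
    simp only [map_mul, Polynomial.aeval_C, map_pow, map_add, Polynomial.aeval_X, map_one]
    norm_num
  have hevu : Polynomial.aeval u P = 0 := by
    have h2 := Polynomial.aeval_algebraMap_apply ℂ u P
    have h3 : (algebraMap (integralClosure ℤ ℂ) ℂ) u = ζ - 1 := rfl
    rw [h3] at h2
    apply Subtype.ext
    have h4 : ((Polynomial.aeval u P : integralClosure ℤ ℂ) : ℂ)
        = (algebraMap (integralClosure ℤ ℂ) ℂ) (Polynomial.aeval u P) := rfl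
    rw [h4, ← h2, hev]
    rfl
  rw [hPQ, map_mul, map_pow, Polynomial.aeval_X] at hevu
  have hQu : Polynomial.aeval u Q = 0 := by
    rcases mul_eq_zero.mp hevu with h | h
    · exfalso
      have h3 := congrArg Subtype.val h
      push_cast at h3
      have h4 : ζ - 1 = 0 := (pow_eq_zero_iff'.mp h3).1
      exact hζ.ne_one hp.one_lt (by rwa [sub_eq_zero] at h4)
    · exact h
  have h4 := congrArg (Polynomial.aeval u) (Polynomial.X_mul_divX_add Q)
  rw [map_add, map_mul, Polynomial.aeval_X, Polynomial.aeval_C, hQu, hQ0] at h4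
  have h5 := congrArg Subtype.val h4
  push_cast at h5
  rw [eq_intCast] at h5
  have hkey : (Sm : ℂ) = (1 - ζ) * (Polynomial.aeval (ζ - 1) Q.divX) := by
    linear_combination h5
  have hw : ((Polynomial.aeval u Q.divX : integralClosure ℤ ℂ) : ℂ)
      = Polynomial.aeval (ζ - 1) Q.divX := by
    have h6 := Polynomial.aeval_algebraMap_apply ℂ u Q.divX
    have h7 : (algebraMap (integralClosure ℤ ℂ) ℂ) u = ζ - 1 := rfl
    rw [h7] at h6
    exact h6.symm
  have hw0 : IsIntegral ℤ (Polynomial.aeval (ζ - 1) Q.divX : ℂ) :=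
    hw ▸ (Polynomial.aeval u Q.divX).2
  exact absurd (int_dvd_of_sub_one_dvd p hp ζ hζ Sm _ hw0 hkey)
    (p_not_dvd_Sm p hp α β hα hβ hαi hβi)

end TaoUncertainty

theorem uncertainty_contrapositive (p : ℕ) (hp : p.Prime) [NeZero p] (f : ZMod p → ℂ)
    (h : (Function.support f).ncard +
      (Function.support (fun k : ZMod p =>
        ∑ x : ZMod p, f x *
          Complex.exp (2 * Real.pi * Complex.I / p) ^ (k.val * x.val))).ncard ≤ p) :
    f = 0 := by
  classical
  by_contra hf
  set ζ := Complex.exp (2 * Real.pi * Complex.I / p) with hζdef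
  set g : ZMod p → ℂ := fun k => ∑ x : ZMod p, f x * ζ ^ (k.val * x.val) with hg
  set s : Finset (ZMod p) := Finset.univ.filter (fun x => f x ≠ 0) with hs
  set t : Finset (ZMod p) := Finset.univ.filter (fun k => g k ≠ 0) with ht
  have hsupf : Function.support f = ↑s := by
    ext x; simp [hs, Function.mem_support]
  have hsupg : Function.support g = ↑t := by
    ext x; simp [ht, Function.mem_support]
  rw [hsupf, hsupg, Set.ncard_coe_finset, Set.ncard_coe_finset] at h
  set n := s.card with hn
  have hcompl : n ≤ tᶜ.card := by
    rw [Finset.card_compl]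
    have : Fintype.card (ZMod p) = p := ZMod.card p
    have ht2 : t.card ≤ Fintype.card (ZMod p) := Finset.card_le_univ t
    omega
  obtain ⟨u, hut, hucard⟩ := Finset.exists_subset_card_eq hcompl
  set a : Fin n → ZMod p := fun i => ((s.equivFin.symm i : {x // x ∈ s}) : ZMod p) with ha
  set b : Fin n → ZMod p := fun i =>
    ((u.equivFin.symm (Fin.cast hucard.symm i) : {x // x ∈ u}) : ZMod p) with hb
  have hainj : Function.Injective a := fun i j hij => by
    apply s.equivFin.symm.injective
    exact Subtype.ext hij
  have hbinj : Function.Injective b := fun i j hij => by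
    have := u.equivFin.symm.injective (Subtype.ext hij)
    apply Fin.ext
    simpa using congrArg Fin.val this
  have hamem : ∀ i, a i ∈ s := fun i => (s.equivFin.symm i).2
  have hbmem : ∀ i, b i ∈ u := fun i => (u.equivFin.symm (Fin.cast hucard.symm i)).2
  set α : Fin n → ℕ := fun i => (b i).val with hα
  set β : Fin n → ℕ := fun i => (a i).val with hβ
  have hvalinj : Function.Injective (ZMod.val : ZMod p → ℕ) := ZMod.val_injective p
  set M : Matrix (Fin n) (Fin n) ℂ := Matrix.of fun i j => ζ ^ (α i * β j) with hM
  set v : Fin n → ℂ := fun j => f (a j) with hv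
  have hMv : M.mulVec v = 0 := by
    funext i
    have hgz : g (b i) = 0 := by
      have : b i ∈ tᶜ := hut (hbmem i)
      rw [Finset.mem_compl, ht, Finset.mem_filter] at this
      by_contra hne
      exact this ⟨Finset.mem_univ _, hne⟩
    have hsum : (M.mulVec v) i = ∑ x ∈ s, f x * ζ ^ ((b i).val * x.val) := by
      rw [Matrix.mulVec, dotProduct]
      rw [← Finset.sum_coe_sort s (fun x => f x * ζ ^ ((b i).val * x.val))]
      rw [← Equiv.sum_comp s.equivFin.symm
        (fun (x : {x // x ∈ s}) => f x * ζ ^ ((b i).val * (x : ZMod p).val))]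
      refine Finset.sum_congr rfl fun j _ => ?_
      simp only [hM, Matrix.of_apply, hv, hα, hβ, ha]
      ring
    have hext : (∑ x ∈ s, f x * ζ ^ ((b i).val * x.val))
        = ∑ x : ZMod p, f x * ζ ^ ((b i).val * x.val) := by
      apply Finset.sum_subset (Finset.subset_univ s)
      intro x _ hxs
      have : f x = 0 := by
        by_contra hne
        exact hxs (by rw [hs]; exact Finset.mem_filter.mpr ⟨Finset.mem_univ _, hne⟩)
      rw [this, zero_mul]
    rw [Pi.zero_apply, hsum, hext, ← hgz, hg]
  have hvne : v ≠ 0 := by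
    obtain ⟨x, hx⟩ := Function.ne_iff.mp hf
    have hxs : x ∈ s := by rw [hs]; exact Finset.mem_filter.mpr ⟨Finset.mem_univ _, hx⟩
    intro hv0
    have hj : v (s.equivFin ⟨x, hxs⟩) = 0 := by rw [hv0]; rfl
    rw [hv, ha] at hj
    simp only [Equiv.symm_apply_apply] at hj
    exact hx hj
  have hdet : M.det = 0 := Matrix.exists_mulVec_eq_zero_iff.mp ⟨v, hvne, hMv⟩
  have hdet2 : M.det = ∑ σ : Equiv.Perm (Fin n), ((Equiv.Perm.sign σ : ℤ) : ℂ) *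
      ζ ^ (TaoUncertainty.ee α β σ) := by
    rw [TaoUncertainty.det_eq_sum]
    refine Finset.sum_congr rfl fun σ _ => ?_
    congr 1
    rw [TaoUncertainty.ee, ← Finset.prod_pow_eq_pow_sum]
    rfl
  exact TaoUncertainty.cheb p hp α β (fun i => ZMod.val_lt (b i)) (fun i => ZMod.val_lt (a i))
    (fun i j hij => hbinj (hvalinj hij)) (fun i j hij => hainj (hvalinj hij))
    (hdet2 ▸ hdet)
end
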